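/- arXiv:1910.07015 — 13 statements merged into one kernel-verified Lean document; each statement's English description precedes it below -/
import Mathlib

section
/- Let Σ be a K×K symmetric positive-definite matrix, α ∈ ℝ^K, V(q) = αᵀ(Σ⁻¹ + diag(q))⁻¹α and γ(q) = (Σ⁻¹ + diag(q))⁻¹α. Then ∂²V/∂q_i∂q_j (q) = 2 γ_i(q) γ_j(q) [(Σ⁻¹ + diag(q))⁻¹]_{ij} for all i, j, i.e., the Hessian of V at q equals 2·diag(γ)·(Σ⁻¹ + diag(q))⁻¹·diag(γ). -/
/-!
Write `B(q) = (M + diag q)⁻¹` and `γ(q) = B(q) α`. Differentiating the inverse gives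
`∂B/∂q_j = -B e_j e_jᵀ B`, hence `∂γ/∂q_j = -γ_j B e_j`. For symmetric `M` the matrix `B` is
symmetric, so `∂V/∂q_i = αᵀ ∂γ/∂q_i = -γ_i (Bα)_i = -γ_i²`, and differentiating once more gives
`2 γ_i γ_j B_ij`. The first identity holds wherever `M + diag q` is invertible, an open condition,
so it may be differentiated at `q`; for `M = Σ⁻¹` and `q ≥ 0` that matrix is positive definite.
-/

open Matrix Filter Topology

-- Any normed-algebra structure on matrices serves to differentiate matrix inversion.
attribute [local instance] Matrix.linftyOpNormedRing Matrix.linftyOpNormedAlgebra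

variable {𝕜 n : Type*} [RCLike 𝕜] [Fintype n] [DecidableEq n]

theorem Matrix.hasFDerivAt_nonsing_inv {A : Matrix n n 𝕜} (hA : IsUnit A) :
    HasFDerivAt (fun X : Matrix n n 𝕜 => X⁻¹)
      (-ContinuousLinearMap.mulLeftRight 𝕜 _ A⁻¹ A⁻¹) A := by
  have h := hasFDerivAt_ringInverse (𝕜 := 𝕜) hA.unit
  rw [coe_units_inv, hA.unit_spec] at h
  simpa only [nonsing_inv_eq_ringInverse] using h

theorem eventually_isUnit_add_diagonal {M : Matrix n n 𝕜} {q : n → 𝕜}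
    (hq : IsUnit (M + diagonal q)) : ∀ᶠ p in 𝓝 q, IsUnit (M + diagonal p) := by
  have hc : Continuous fun p : n → 𝕜 => M + diagonal p := by fun_prop
  exact hc.continuousAt.eventually_mem (Units.isOpen.mem_nhds hq)

noncomputable def gamma (M : Matrix n n 𝕜) (α r : n → 𝕜) : n → 𝕜 := (M + diagonal r)⁻¹ *ᵥ α

section gamma

variable {M : Matrix n n 𝕜} (α : n → 𝕜) {p : n → 𝕜}

theorem hasFDerivAt_gamma (hp : IsUnit (M + diagonal p)) :
    HasFDerivAt (gamma M α)
      ((LinearMap.applyₗ α ∘ₗ Matrix.toLin'.toLinearMap).toContinuousLinearMap ∘L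
        (-ContinuousLinearMap.mulLeftRight 𝕜 _ (M + diagonal p)⁻¹ (M + diagonal p)⁻¹) ∘L
        (diagonalLinearMap n 𝕜 𝕜).toContinuousLinearMap) p := by
  have hdiag : HasFDerivAt (fun r : n → 𝕜 => M + diagonal r)
      (diagonalLinearMap n 𝕜 𝕜).toContinuousLinearMap p :=
    (diagonalLinearMap n 𝕜 𝕜).toContinuousLinearMap.hasFDerivAt.const_add M
  exact (LinearMap.applyₗ α ∘ₗ Matrix.toLin'.toLinearMap).toContinuousLinearMap.hasFDerivAt.comp p
    ((hasFDerivAt_nonsing_inv hp).comp p hdiag)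

theorem differentiableAt_gamma (hp : IsUnit (M + diagonal p)) :
    DifferentiableAt 𝕜 (gamma M α) p :=
  (hasFDerivAt_gamma α hp).differentiableAt

theorem fderiv_gamma_single (hp : IsUnit (M + diagonal p)) (j : n) :
    fderiv 𝕜 (gamma M α) p (Pi.single j 1) =
      -(gamma M α p j • ((M + diagonal p)⁻¹).col j) := by
  rw [(hasFDerivAt_gamma α hp).fderiv]
  have hsingle : diagonal (Pi.single j 1) *ᵥ gamma M α p = Pi.single j (gamma M α p j) := by
    ext k
    rcases eq_or_ne k j with rfl | hk <;> simp [mulVec_diagonal, *]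
  change -((M + diagonal p)⁻¹ * diagonal (Pi.single j 1) * (M + diagonal p)⁻¹) *ᵥ α = _
  rw [neg_mulVec, ← mulVec_mulVec, ← mulVec_mulVec,
    show (M + diagonal p)⁻¹ *ᵥ α = gamma M α p from rfl, hsingle, mulVec_single, op_smul_eq_smul]

theorem fderiv_dotProduct_gamma_single (hM : M.IsSymm) (hp : IsUnit (M + diagonal p)) (i : n) :
    fderiv 𝕜 (fun r => α ⬝ᵥ gamma M α r) p (Pi.single i 1) = -gamma M α p i ^ 2 := by
  have hB : ((M + diagonal p)⁻¹).IsSymm := (hM.add (isSymm_diagonal p)).inv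
  have h : HasFDerivAt (fun r => α ⬝ᵥ gamma M α r)
      ((dotProductBilin 𝕜 𝕜 α).toContinuousLinearMap ∘L fderiv 𝕜 (gamma M α) p) p :=
    (dotProductBilin 𝕜 𝕜 α).toContinuousLinearMap.hasFDerivAt.comp p
      (differentiableAt_gamma α hp).hasFDerivAt
  rw [h.fderiv, ContinuousLinearMap.comp_apply, fderiv_gamma_single α hp]
  change α ⬝ᵥ -(gamma M α p i • ((M + diagonal p)⁻¹).col i) = _
  rw [dotProduct_neg, dotProduct_smul, smul_eq_mul]
  change -(gamma M α p i * (α ᵥ* (M + diagonal p)⁻¹) i) = _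
  rw [← mulVec_transpose, hB.eq, sq]
  rfl

theorem fderiv_gamma_apply_sq_single (hp : IsUnit (M + diagonal p)) (i j : n) :
    fderiv 𝕜 (fun r => gamma M α r i ^ 2) p (Pi.single j 1) =
      -(2 * gamma M α p i * gamma M α p j * (M + diagonal p)⁻¹ i j) := by
  have hd := differentiableAt_gamma α hp
  rw [fderiv_fun_pow 2 (differentiableAt_pi.1 hd i), _root_.smul_apply, fderiv_apply hd i,
    ContinuousLinearMap.comp_apply, ContinuousLinearMap.proj_apply, fderiv_gamma_single α hp]
  simp only [Nat.add_one_sub_one, pow_one, nsmul_eq_mul, Nat.cast_ofNat, Pi.neg_apply,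
    Pi.smul_apply, col_apply, smul_eq_mul]
  ring

end gamma

theorem stmt_2 {K : ℕ} (S : Matrix (Fin K) (Fin K) ℝ) (hS : S.PosDef)
    (α : Fin K → ℝ) (q : Fin K → ℝ) (hq : ∀ i, 0 ≤ q i) (i j : Fin K) :
    fderiv ℝ
        (fun p : Fin K → ℝ =>
          fderiv ℝ (fun r : Fin K → ℝ => α ⬝ᵥ ((S⁻¹ + diagonal r)⁻¹ *ᵥ α)) p
            (Pi.single i 1))
        q (Pi.single j 1)
      = 2 * (((S⁻¹ + diagonal q)⁻¹ *ᵥ α) i) * (((S⁻¹ + diagonal q)⁻¹ *ᵥ α) j) *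
          ((S⁻¹ + diagonal q)⁻¹ i j) := by
  have hsymm : S⁻¹.IsSymm := (isHermitian_iff_isSymm.1 hS.isHermitian).inv
  have hunit : IsUnit (S⁻¹ + diagonal q) :=
    (hS.inv.add_posSemidef (posSemidef_diagonal_iff.2 hq)).isUnit
  have hgrad : (fun p => fderiv ℝ (fun r => α ⬝ᵥ gamma S⁻¹ α r) p (Pi.single i 1))
      =ᶠ[𝓝 q] fun p => -gamma S⁻¹ α p i ^ 2 :=
    (eventually_isUnit_add_diagonal hunit).mono fun p hp =>
      fderiv_dotProduct_gamma_single α hsymm hp i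
  change fderiv ℝ (fun p => fderiv ℝ (fun r => α ⬝ᵥ gamma S⁻¹ α r) p (Pi.single i 1)) q
    (Pi.single j 1) = 2 * gamma S⁻¹ α q i * gamma S⁻¹ α q j * (S⁻¹ + diagonal q)⁻¹ i j
  rw [hgrad.fderiv_eq, fderiv_fun_neg, _root_.neg_apply, fderiv_gamma_apply_sq_single α hunit, neg_neg]
end

section
/- For any K×K symmetric positive-definite matrix Σ and α ∈ ℝ^K, the function V(q) = αᵀ(Σ⁻¹ + diag(q))⁻¹α is decreasing in each coordinate and convex on the domain q ∈ ℝ_{≥0}^K. -/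
/-!
For positive definite `M`, `αᵀ M⁻¹ α = max_x (2 αᵀ x - xᵀ M x)`, the maximum being attained at
`x = M⁻¹ α`. Each function `M ↦ 2 αᵀ x - xᵀ M x` is affine and antitone for the Loewner order, so
their supremum `M ↦ αᵀ M⁻¹ α` is convex and antitone on positive definite matrices. Composing with
the affine, monotone map `q ↦ Σ⁻¹ + diag q` gives both claims.
-/

open Matrix

namespace Matrix.PosDef

variable {n : Type*} [Fintype n] {M N : Matrix n n ℝ}

theorem dotProduct_mulVec_comm (hM : M.PosDef) (x y : n → ℝ) :
    x ⬝ᵥ (M *ᵥ y) = y ⬝ᵥ (M *ᵥ x) := by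
  rw [dotProduct_mulVec, ← mulVec_transpose, ← conjTranspose_eq_transpose_of_trivial,
    hM.isHermitian.eq, dotProduct_comm]

variable [DecidableEq n]

theorem mulVec_inv_mulVec (hM : M.PosDef) (α : n → ℝ) : M *ᵥ (M⁻¹ *ᵥ α) = α := by
  rw [mulVec_mulVec, mul_nonsing_inv _ ((isUnit_iff_isUnit_det M).mp hM.isUnit), one_mulVec]

theorem two_mul_dotProduct_sub_le (hM : M.PosDef) (α x : n → ℝ) :
    2 * (α ⬝ᵥ x) - x ⬝ᵥ (M *ᵥ x) ≤ α ⬝ᵥ (M⁻¹ *ᵥ α) := by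
  set z := M⁻¹ *ᵥ α
  have hz : M *ᵥ z = α := hM.mulVec_inv_mulVec α
  have hsq : 0 ≤ (x - z) ⬝ᵥ (M *ᵥ (x - z)) := by
    simpa using hM.posSemidef.dotProduct_mulVec_nonneg (x - z)
  have hxz : z ⬝ᵥ (M *ᵥ x) = x ⬝ᵥ α := by rw [← hM.dotProduct_mulVec_comm, hz]
  simp only [mulVec_sub, dotProduct_sub, sub_dotProduct, hxz, hz] at hsq
  rw [dotProduct_comm z α, dotProduct_comm x α] at hsq
  linarith

theorem two_mul_dotProduct_sub_inv_mulVec (hM : M.PosDef) (α : n → ℝ) :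
    2 * (α ⬝ᵥ (M⁻¹ *ᵥ α)) - (M⁻¹ *ᵥ α) ⬝ᵥ (M *ᵥ (M⁻¹ *ᵥ α)) = α ⬝ᵥ (M⁻¹ *ᵥ α) := by
  rw [hM.mulVec_inv_mulVec, dotProduct_comm]
  ring

theorem dotProduct_inv_mulVec_le_of_sub_posSemidef (hM : M.PosDef) (hMN : (N - M).PosSemidef)
    (α : n → ℝ) :
    α ⬝ᵥ (N⁻¹ *ᵥ α) ≤ α ⬝ᵥ (M⁻¹ *ᵥ α) := by
  have hN : N.PosDef := by simpa using hM.add_posSemidef hMN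
  set z := N⁻¹ *ᵥ α
  have hgap : 0 ≤ z ⬝ᵥ ((N - M) *ᵥ z) := by simpa using hMN.dotProduct_mulVec_nonneg z
  calc α ⬝ᵥ z = 2 * (α ⬝ᵥ z) - z ⬝ᵥ (N *ᵥ z) := (hN.two_mul_dotProduct_sub_inv_mulVec α).symm
    _ ≤ 2 * (α ⬝ᵥ z) - z ⬝ᵥ (M *ᵥ z) := by
      rw [sub_mulVec, dotProduct_sub] at hgap
      linarith
    _ ≤ α ⬝ᵥ (M⁻¹ *ᵥ α) := hM.two_mul_dotProduct_sub_le α z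

end Matrix.PosDef

namespace Matrix

theorem convex_setOf_posDef {n : Type*} : Convex ℝ {M : Matrix n n ℝ | M.PosDef} :=
  convex_iff_forall_pos.2 fun _ hM _ hN _ _ ha hb _ => (hM.smul ha).add (hN.smul hb)

theorem convexOn_dotProduct_inv_mulVec {n : Type*} [Fintype n] [DecidableEq n] (α : n → ℝ) :
    ConvexOn ℝ {M : Matrix n n ℝ | M.PosDef} fun M => α ⬝ᵥ (M⁻¹ *ᵥ α) := by
  refine ⟨convex_setOf_posDef, fun M hM N hN a b ha hb hab => ?_⟩
  have hMN : (a • M + b • N).PosDef := convex_setOf_posDef hM hN ha hb hab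
  set z := (a • M + b • N)⁻¹ *ᵥ α
  have hM' := mul_le_mul_of_nonneg_left (hM.two_mul_dotProduct_sub_le α z) ha
  have hN' := mul_le_mul_of_nonneg_left (hN.two_mul_dotProduct_sub_le α z) hb
  calc α ⬝ᵥ z = 2 * (α ⬝ᵥ z) - z ⬝ᵥ ((a • M + b • N) *ᵥ z) :=
        (hMN.two_mul_dotProduct_sub_inv_mulVec α).symm
    _ = a * (2 * (α ⬝ᵥ z) - z ⬝ᵥ (M *ᵥ z)) + b * (2 * (α ⬝ᵥ z) - z ⬝ᵥ (N *ᵥ z)) := by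
      simp only [add_mulVec, smul_mulVec, dotProduct_add, dotProduct_smul, smul_eq_mul]
      linear_combination (-2 * (α ⬝ᵥ z)) * hab
    _ ≤ a • (α ⬝ᵥ (M⁻¹ *ᵥ α)) + b • (α ⬝ᵥ (N⁻¹ *ᵥ α)) := by
      simp only [smul_eq_mul]
      linarith

end Matrix

theorem stmt_3 {K : ℕ} (S : Matrix (Fin K) (Fin K) ℝ) (hS : S.PosDef)
    (α : Fin K → ℝ) :
    (∀ q q' : Fin K → ℝ, (∀ i, 0 ≤ q i) → (∀ i, q i ≤ q' i) →
      α ⬝ᵥ ((S⁻¹ + diagonal q')⁻¹ *ᵥ α) ≤ α ⬝ᵥ ((S⁻¹ + diagonal q)⁻¹ *ᵥ α)) ∧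
    ConvexOn ℝ {q : Fin K → ℝ | ∀ i, 0 ≤ q i}
      (fun q => α ⬝ᵥ ((S⁻¹ + diagonal q)⁻¹ *ᵥ α)) := by
  have hposDef {q : Fin K → ℝ} (hq : ∀ i, 0 ≤ q i) : (S⁻¹ + diagonal q).PosDef :=
    hS.inv.add_posSemidef (posSemidef_diagonal_iff.mpr hq)
  refine ⟨fun q q' hq hqq' => ?_, ?_⟩
  · refine (hposDef hq).dotProduct_inv_mulVec_le_of_sub_posSemidef ?_ α
    rw [add_sub_add_left_eq_sub, diagonal_sub]
    exact posSemidef_diagonal_iff.mpr fun i => sub_nonneg.mpr (hqq' i)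
  · exact (((convexOn_dotProduct_inv_mulVec α).translate_right S⁻¹).comp_linearMap
      (diagonalLinearMap (Fin K) ℝ ℝ)).subset (fun q hq => hposDef hq) (convex_Ici 0)
end

section
/- Suppose the K×K symmetric positive-definite matrix Σ⁻¹ is (weakly) diagonally dominant, i.e. [Σ⁻¹]_{ii} ≥ Σ_{j≠i} |[Σ⁻¹]_{ij}| for all i. Let q ∈ ℝ_{≥0}^K, α ∈ ℝ^K with all α_i > 0, and γ = (Σ⁻¹ + diag(q))⁻¹α. If B = argmax_i |γ_i|, then γ_i is strictly positive (and equal to a common value) for every i ∈ B. -/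
open Matrix

theorem stmt_4 {K : ℕ} (S : Matrix (Fin K) (Fin K) ℝ) (hS : S.PosDef)
    (hdd : ∀ i, ∑ j ∈ Finset.univ.erase i, |S⁻¹ i j| ≤ S⁻¹ i i)
    (q : Fin K → ℝ) (hq : ∀ i, 0 ≤ q i)
    (α : Fin K → ℝ) (hα : ∀ i, 0 < α i) :
    ∀ i, (∀ j, |((S⁻¹ + diagonal q)⁻¹ *ᵥ α) j| ≤ |((S⁻¹ + diagonal q)⁻¹ *ᵥ α) i|) →
      0 < ((S⁻¹ + diagonal q)⁻¹ *ᵥ α) i ∧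
      ∀ i', (∀ j, |((S⁻¹ + diagonal q)⁻¹ *ᵥ α) j| ≤ |((S⁻¹ + diagonal q)⁻¹ *ᵥ α) i'|) →
        ((S⁻¹ + diagonal q)⁻¹ *ᵥ α) i = ((S⁻¹ + diagonal q)⁻¹ *ᵥ α) i' := by
  set M : Matrix (Fin K) (Fin K) ℝ := S⁻¹ + diagonal q with hMdef
  set γ : Fin K → ℝ := M⁻¹ *ᵥ α with hγdef
  have hMpd : M.PosDef := hS.inv.add_posSemidef (PosSemidef.diagonal hq)
  have hMunit : IsUnit M.det := isUnit_iff_ne_zero.mpr (ne_of_gt hMpd.det_pos)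
  have hMγ : M *ᵥ γ = α := by
    rw [hγdef, mulVec_mulVec, Matrix.mul_nonsing_inv _ hMunit, one_mulVec]
  have key : ∀ i, (∀ j, |γ j| ≤ |γ i|) → 0 < γ i := by
    intro i hi
    by_contra h
    push_neg at h
    have hαi : α i = M i i * γ i + ∑ j ∈ Finset.univ.erase i, M i j * γ j := by
      rw [← hMγ]
      rw [show (M *ᵥ γ) i = ∑ j, M i j * γ j from rfl]
      exact (Finset.add_sum_erase Finset.univ (fun j => M i j * γ j) (Finset.mem_univ i)).symm
    have h1 : ∑ j ∈ Finset.univ.erase i, M i j * γ j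
        ≤ (∑ j ∈ Finset.univ.erase i, |M i j|) * |γ i| := by
      rw [Finset.sum_mul]
      refine Finset.sum_le_sum fun j _ => ?_
      calc M i j * γ j ≤ |M i j * γ j| := le_abs_self _
        _ = |M i j| * |γ j| := abs_mul _ _
        _ ≤ |M i j| * |γ i| := mul_le_mul_of_nonneg_left (hi j) (abs_nonneg _)
    have hoff : ∑ j ∈ Finset.univ.erase i, |M i j| = ∑ j ∈ Finset.univ.erase i, |S⁻¹ i j| := by
      refine Finset.sum_congr rfl fun j hj => ?_
      have hji : j ≠ i := Finset.ne_of_mem_erase hj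
      simp [hMdef, Matrix.add_apply, diagonal_apply_ne' q hji]
    have hMii : M i i = S⁻¹ i i + q i := by
      simp [hMdef, Matrix.add_apply, diagonal_apply_eq]
    have h2 : (∑ j ∈ Finset.univ.erase i, |M i j|) ≤ M i i := by
      rw [hoff, hMii]
      linarith [hdd i, hq i]
    have h3 : (∑ j ∈ Finset.univ.erase i, |M i j|) * |γ i| ≤ M i i * |γ i| :=
      mul_le_mul_of_nonneg_right h2 (abs_nonneg _)
    have habs : |γ i| = -γ i := abs_of_nonpos h
    have h4 : M i i * |γ i| = -(M i i * γ i) := by rw [habs]; ring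
    linarith [hα i]
  intro i hi
  refine ⟨key i hi, fun i' hi' => ?_⟩
  have h1 : |γ i| = |γ i'| := le_antisymm (hi' i) (hi i')
  have h2 := key i hi
  have h3 := key i' hi'
  rw [abs_of_pos h2, abs_of_pos h3] at h1
  exact h1
end

section
/- Let Σ be a K×K symmetric positive-definite matrix satisfying Σ_{ii} ≥ (2K−3)·|Σ_{ij}| for all i ≠ j (with K ≥ 2). Then the inverse matrix satisfies [Σ⁻¹]_{ii} ≥ (K−1)·|[Σ⁻¹]_{ij}| for all i ≠ j; in particular Σ⁻¹ is diagonally dominant. -/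
/-!
Write `P = S⁻¹` and fix a row `i` of `P`. For `j ≠ i` the row is orthogonal to column `j` of `S`,
and the dominance of `S j j` over that column gives `(2K - 3) |P i j| ≤ ∑_{k ≠ j} |P i k|`.
Taking `j` where `|P i j|` is largest among the off-diagonal entries, the right side is at most
`P i i + (K - 2) |P i j|`, whence `(K - 1) |P i j| ≤ P i i`.
-/

open Matrix Finset

variable {ι : Type*} [Fintype ι] [DecidableEq ι]

lemma cast_card_univ_erase (i : ι) :
    ((univ.erase i).card : ℝ) = Fintype.card ι - 1 := by
  rw [card_erase_of_mem (mem_univ i), card_univ, Nat.cast_pred (Fintype.card_pos_iff.2 ⟨i⟩)]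

lemma mul_abs_le_sum_abs_erase_of_dotProduct_eq_zero {x v : ι → ℝ} {c : ℝ} {j : ι}
    (hc : 0 ≤ c) (hvj : 0 < v j) (hv : ∀ k ≠ j, c * |v k| ≤ v j) (hxv : x ⬝ᵥ v = 0) :
    c * |x j| ≤ ∑ k ∈ univ.erase j, |x k| := by
  have hsplit : x j * v j = -∑ k ∈ univ.erase j, x k * v k := by
    rw [dotProduct, ← add_sum_erase _ _ (mem_univ j)] at hxv
    linarith
  refine le_of_mul_le_mul_right ?_ hvj
  calc c * |x j| * v j = c * |∑ k ∈ univ.erase j, x k * v k| := by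
        rw [mul_assoc, ← abs_of_pos hvj, ← abs_mul, hsplit, abs_neg]
    _ ≤ c * ∑ k ∈ univ.erase j, |x k * v k| :=
        mul_le_mul_of_nonneg_left (abs_sum_le_sum_abs _ _) hc
    _ = ∑ k ∈ univ.erase j, |x k| * (c * |v k|) := by
        rw [mul_sum]
        exact sum_congr rfl fun k _ => by rw [abs_mul]; ring
    _ ≤ ∑ k ∈ univ.erase j, |x k| * v j :=
        sum_le_sum fun k hk => mul_le_mul_of_nonneg_left (hv k (ne_of_mem_erase hk)) (abs_nonneg _)
    _ = (∑ k ∈ univ.erase j, |x k|) * v j := (sum_mul _ _ _).symm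

lemma two_mul_card_sub_three_mul_abs_le_of_mul_eq_one {P S : Matrix ι ι ℝ} (hPS : P * S = 1)
    (hSsymm : S.IsSymm) (hSdiag : ∀ j, 0 < S j j)
    (hSdom : ∀ j k, j ≠ k → (2 * (Fintype.card ι : ℝ) - 3) * |S j k| ≤ S j j)
    {i j : ι} (hij : i ≠ j) :
    (2 * (Fintype.card ι : ℝ) - 3) * |P i j| ≤ ∑ k ∈ univ.erase j, |P i k| := by
  have hcard : (2 : ℝ) ≤ Fintype.card ι := by
    exact_mod_cast Fintype.one_lt_card_iff.2 ⟨i, j, hij⟩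
  have hcol : (fun k => S k j) = S j := funext fun k => hSsymm.apply j k
  have hPSij := congrFun (congrFun hPS i) j
  rw [mul_apply', hcol, one_apply_ne hij] at hPSij
  exact mul_abs_le_sum_abs_erase_of_dotProduct_eq_zero (by linarith) (hSdiag j)
    (fun k hkj => hSdom j k hkj.symm) hPSij

lemma card_sub_one_mul_abs_le {x : ι → ℝ} {i : ι} (hxi : 0 ≤ x i)
    (hx : ∀ j ≠ i, (2 * (Fintype.card ι : ℝ) - 3) * |x j| ≤ ∑ k ∈ univ.erase j, |x k|)
    {j : ι} (hji : j ≠ i) :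
    ((Fintype.card ι : ℝ) - 1) * |x j| ≤ x i := by
  have hj : j ∈ univ.erase i := mem_erase.2 ⟨hji, mem_univ j⟩
  obtain ⟨j₀, hj₀, hmax⟩ := exists_max_image (univ.erase i) (fun k => |x k|) ⟨j, hj⟩
  have hoff : ∑ k ∈ univ.erase i, |x k| ≤ (Fintype.card ι - 1) * |x j₀| := by
    rw [← cast_card_univ_erase i, ← nsmul_eq_mul]
    exact sum_le_card_nsmul _ _ _ hmax
  have hrow := hx j₀ (ne_of_mem_erase hj₀)
  rw [sum_erase_eq_sub (mem_univ j₀)] at hrow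
  rw [sum_erase_eq_sub (mem_univ i), abs_of_nonneg hxi] at hoff
  have hn : (1 : ℝ) ≤ Fintype.card ι := by exact_mod_cast Fintype.card_pos_iff.2 ⟨i⟩
  calc ((Fintype.card ι : ℝ) - 1) * |x j| ≤ (Fintype.card ι - 1) * |x j₀| :=
        mul_le_mul_of_nonneg_left (hmax j hj) (sub_nonneg.2 hn)
    _ ≤ x i := by linarith

lemma sum_abs_erase_le_of_card_sub_one_mul_abs_le {x : ι → ℝ} {i : ι} {a : ℝ} (ha : 0 ≤ a)
    (hx : ∀ j ≠ i, ((Fintype.card ι : ℝ) - 1) * |x j| ≤ a) :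
    ∑ j ∈ univ.erase i, |x j| ≤ a := by
  rcases (univ.erase i).eq_empty_or_nonempty with hempty | ⟨j, hj⟩
  · simpa [hempty] using ha
  have hpos : (0 : ℝ) < Fintype.card ι - 1 := by
    rw [← cast_card_univ_erase i]
    exact_mod_cast card_pos.2 ⟨j, hj⟩
  refine le_of_mul_le_mul_left ?_ hpos
  calc ((Fintype.card ι : ℝ) - 1) * ∑ j ∈ univ.erase i, |x j|
      = ∑ j ∈ univ.erase i, ((Fintype.card ι : ℝ) - 1) * |x j| := mul_sum _ _ _
    _ ≤ ((univ.erase i).card : ℝ) * a := by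
        rw [← nsmul_eq_mul]
        exact sum_le_card_nsmul _ _ _ fun j hj => hx j (ne_of_mem_erase hj)
    _ = ((Fintype.card ι : ℝ) - 1) * a := by rw [cast_card_univ_erase]

theorem stmt_5_general {K : ℕ} (S : Matrix (Fin K) (Fin K) ℝ) (hS : S.PosDef)
    (h : ∀ i j, i ≠ j → (2 * (K : ℝ) - 3) * |S i j| ≤ S i i) :
    (∀ i j, i ≠ j → ((K : ℝ) - 1) * |S⁻¹ i j| ≤ S⁻¹ i i) ∧
    (∀ i, ∑ j ∈ Finset.univ.erase i, |S⁻¹ i j| ≤ S⁻¹ i i) := by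
  have hPS : S⁻¹ * S = 1 := nonsing_inv_mul S ((isUnit_iff_isUnit_det S).1 hS.isUnit)
  have hSsymm : S.IsSymm := by simpa using hS.1
  have hdom : ∀ i j, i ≠ j → ((Fintype.card (Fin K) : ℝ) - 1) * |S⁻¹ i j| ≤ S⁻¹ i i :=
    fun i j hij => card_sub_one_mul_abs_le hS.inv.diag_pos.le
      (fun k hki => two_mul_card_sub_three_mul_abs_le_of_mul_eq_one hPS hSsymm
        (fun _ => hS.diag_pos) (by simpa using h) hki.symm) hij.symm
  refine ⟨fun i j hij => by simpa only [Fintype.card_fin] using hdom i j hij, fun i => ?_⟩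
  exact sum_abs_erase_le_of_card_sub_one_mul_abs_le hS.inv.diag_pos.le
    fun j hji => hdom i j hji.symm

theorem stmt_5 {K : ℕ} (hK : 2 ≤ K) (S : Matrix (Fin K) (Fin K) ℝ) (hS : S.PosDef)
    (h : ∀ i j, i ≠ j → (2 * (K : ℝ) - 3) * |S i j| ≤ S i i) :
    (∀ i j, i ≠ j → ((K : ℝ) - 1) * |S⁻¹ i j| ≤ S⁻¹ i i) ∧
    (∀ i, ∑ j ∈ Finset.univ.erase i, |S⁻¹ i j| ≤ S⁻¹ i i) :=
  stmt_5_general S hS h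
end

section
/- Let Σ be a K×K symmetric positive-definite matrix whose inverse Σ⁻¹ has non-positive off-diagonal entries (i.e. Σ⁻¹ is an M-matrix), and let α ∈ ℝ^K have strictly positive coordinates. Then for every q ∈ ℝ_{≥0}^K, the vector γ = (Σ⁻¹ + diag(q))⁻¹α has strictly positive coordinates. -/
/-!
A symmetric positive-definite matrix `B` with non-positive off-diagonal entries is monotone:
`B x ≥ 0` forces `x ≥ 0`. Indeed, pairing `B x` with the negative part `x⁻` gives
`0 ≤ ⟪x⁻, B x⁺⟫ - ⟪x⁻, B x⁻⟫`, and the first term is `≤ 0` because `x⁺` and `x⁻` have disjoint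
supports, so `⟪x⁻, B x⁻⟫ ≤ 0` and `x⁻ = 0`. If moreover `B x > 0`, a zero coordinate `x i` would give
`(B x) i = ∑_{j ≠ i} B i j x j ≤ 0`. Adding `diag q` to the M-matrix `Σ⁻¹` keeps both properties, and
`γ = (Σ⁻¹ + diag q)⁻¹ α` solves `(Σ⁻¹ + diag q) γ = α > 0`.
-/

open Matrix

namespace Matrix

variable {n R : Type*} [Fintype n]

lemma dotProduct_mulVec_nonpos_of_offDiag_nonpos [CommRing R] [PartialOrder R] [IsOrderedRing R]
    {B : Matrix n n R} (hoff : ∀ i j, i ≠ j → B i j ≤ 0) {u v : n → R} (hu : 0 ≤ u) (hv : 0 ≤ v)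
    (huv : ∀ i, u i * v i = 0) : u ⬝ᵥ (B *ᵥ v) ≤ 0 := by
  simp only [dotProduct, mulVec, Finset.mul_sum]
  refine Finset.sum_nonpos fun i _ => Finset.sum_nonpos fun j _ => ?_
  rcases eq_or_ne i j with rfl | hij
  · rw [mul_left_comm, huv, mul_zero]
  · rw [← mul_assoc, mul_comm (u i)]
    exact mul_nonpos_of_nonpos_of_nonneg
      (mul_nonpos_of_nonpos_of_nonneg (hoff i j hij) (hu i)) (hv j)

lemma PosDef.nonneg_of_mulVec_nonneg {B : Matrix n n ℝ} (hB : B.PosDef)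
    (hoff : ∀ i j, i ≠ j → B i j ≤ 0) {x : n → ℝ} (hx : 0 ≤ B *ᵥ x) : 0 ≤ x := by
  have hdisjoint : ∀ i, x⁻ i * x⁺ i = 0 := fun i => by
    rcases le_total 0 (x i) with h | h <;> simp [h]
  have hpair : 0 ≤ x⁻ ⬝ᵥ (B *ᵥ x) := dotProduct_nonneg_of_nonneg (negPart_nonneg x) hx
  have hcross : x⁻ ⬝ᵥ (B *ᵥ x⁺) ≤ 0 :=
    dotProduct_mulVec_nonpos_of_offDiag_nonpos hoff (negPart_nonneg x) (posPart_nonneg x) hdisjoint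
  have hsplit : x⁻ ⬝ᵥ (B *ᵥ x) = x⁻ ⬝ᵥ (B *ᵥ x⁺) - x⁻ ⬝ᵥ (B *ᵥ x⁻) := by
    rw [← dotProduct_sub, ← mulVec_sub, posPart_sub_negPart]
  have hneg : x⁻ = 0 := by
    by_contra hne
    have hpos := hB.dotProduct_mulVec_pos hne
    rw [star_trivial] at hpos
    linarith
  exact negPart_eq_zero.mp hneg

lemma pos_of_mulVec_pos [CommRing R] [PartialOrder R] [IsOrderedRing R] [DecidableEq n]
    {B : Matrix n n R} (hoff : ∀ i j, i ≠ j → B i j ≤ 0) {x : n → R} (hx : 0 ≤ x)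
    {i : n} (hBx : 0 < (B *ᵥ x) i) : 0 < x i := by
  refine (hx i).lt_of_ne fun hxi => hBx.not_ge ?_
  have hsingle : ∀ j, (Pi.single i (1 : R) : n → R) j * x j = 0 := fun j => by
    rcases eq_or_ne j i with rfl | hji
    · simp [← hxi]
    · simp [hji]
  simpa [single_one_dotProduct] using
    dotProduct_mulVec_nonpos_of_offDiag_nonpos hoff (Pi.single_nonneg.mpr zero_le_one) hx hsingle

lemma PosDef.pos_of_mulVec_pos [DecidableEq n] {B : Matrix n n ℝ} (hB : B.PosDef)
    (hoff : ∀ i j, i ≠ j → B i j ≤ 0) {x : n → ℝ} (hx : ∀ i, 0 < (B *ᵥ x) i) (i : n) :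
    0 < x i :=
  Matrix.pos_of_mulVec_pos hoff (hB.nonneg_of_mulVec_nonneg hoff fun j => (hx j).le) (hx i)

end Matrix

theorem stmt_6 {K : ℕ} (S : Matrix (Fin K) (Fin K) ℝ) (hS : S.PosDef)
    (hM : ∀ i j, i ≠ j → S⁻¹ i j ≤ 0)
    (α : Fin K → ℝ) (hα : ∀ i, 0 < α i)
    (q : Fin K → ℝ) (hq : ∀ i, 0 ≤ q i) :
    ∀ i, 0 < ((S⁻¹ + diagonal q)⁻¹ *ᵥ α) i := by
  set B := S⁻¹ + diagonal q
  have hB : B.PosDef := hS.inv.add_posSemidef (posSemidef_diagonal_iff.mpr hq)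
  have hoff : ∀ i j, i ≠ j → B i j ≤ 0 := fun i j hij => by
    simpa [B, diagonal_apply_ne _ hij] using hM i j hij
  have hsolve : B *ᵥ (B⁻¹ *ᵥ α) = α := by
    rw [mulVec_mulVec, mul_nonsing_inv _ hB.det_pos.ne'.isUnit, one_mulVec]
  exact hB.pos_of_mulVec_pos hoff (by rwa [hsolve])
end

section
/- Let Σ be a K×K symmetric positive-definite matrix with non-positive off-diagonal entries such that Σα has non-negative coordinates, where α ∈ ℝ^K is strictly positive. Define V(q) = αᵀ(Σ⁻¹ + diag(q))⁻¹α. Then for every q ∈ ℝ_{≥0}^K and every pair i ≠ j, ∂²V/∂q_i∂q_j (q) ≤ 0 (the sources are perpetual complements). -/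
/-!
Write `M(q) = (Σ⁻¹ + diag q)⁻¹` and `u = M(q) α`. Differentiating `M` twice gives
`∂V/∂q_i = -u_i²` and `∂²V/∂q_i∂q_j = 2 u_i M_ij u_j`, so it suffices that `u ≥ 0` and that `M`
has non-positive off-diagonal entries. For `q > 0` put `E = diag (1/q)`; then
`M = E (Σ + E)⁻¹ Σ = E - E (Σ + E)⁻¹ E`, and `Σ + E` is a positive-definite Z-matrix, hence
has an entrywise non-negative inverse. Both sign conditions follow, and they pass to `q ≥ 0`
by continuity of `M`.
-/

open Matrix

theorem le_of_forall_pos_of_continuousAt {ι : Type*} {f g : (ι → ℝ) → ℝ}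
    (hf : ∀ p, 0 ≤ p → ContinuousAt f p) (hg : ∀ p, 0 ≤ p → ContinuousAt g p)
    (h : ∀ p, (∀ k, 0 < p k) → f p ≤ g p) {p : ι → ℝ} (hp : 0 ≤ p) : f p ≤ g p := by
  have hcl : ∀ q, q ∈ closure (Set.univ.pi fun _ : ι => Set.Ioi (0 : ℝ)) ↔ 0 ≤ q := by
    simp [closure_pi_set, Pi.le_def]
  exact le_on_closure (s := Set.univ.pi fun _ => Set.Ioi 0)
    (fun q hq => h q fun k => hq k (Set.mem_univ k))
    (fun q hq => (hf q ((hcl q).mp hq)).continuousWithinAt)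
    (fun q hq => (hg q ((hcl q).mp hq)).continuousWithinAt) ((hcl p).mpr hp)

namespace Matrix

section ZMatrix

variable {n : Type*} [Fintype n]

theorem dotProduct_mulVec_nonpos_of_mul_eq_zero {A : Matrix n n ℝ}
    (hA : ∀ k l, k ≠ l → A k l ≤ 0) {y z : n → ℝ} (hy : 0 ≤ y) (hz : 0 ≤ z)
    (hyz : ∀ k, y k * z k = 0) : y ⬝ᵥ (A *ᵥ z) ≤ 0 := by
  refine Finset.sum_nonpos fun k _ => ?_
  rw [mulVec, dotProduct, Finset.mul_sum]
  refine Finset.sum_nonpos fun l _ => ?_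
  rcases eq_or_ne k l with rfl | hkl
  · rw [mul_left_comm, hyz, mul_zero]
  · exact mul_nonpos_of_nonneg_of_nonpos (hy k)
      (mul_nonpos_of_nonpos_of_nonneg (hA k l hkl) (hz l))

theorem mulVec_nonneg {A : Matrix n n ℝ} (hA : ∀ k l, 0 ≤ A k l) {x : n → ℝ} (hx : 0 ≤ x) :
    0 ≤ A *ᵥ x :=
  fun k => Finset.sum_nonneg fun l _ => mul_nonneg (hA k l) (hx l)

-- Pair `A x ≥ 0` with `x⁻`: the sign pattern of `A` forces `x⁻ ⬝ᵥ A *ᵥ x⁻ ≤ 0`.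
theorem PosDef.nonneg_of_mulVec_nonneg_s8 {A : Matrix n n ℝ} (hA : A.PosDef)
    (hZ : ∀ k l, k ≠ l → A k l ≤ 0) {x : n → ℝ} (hx : 0 ≤ A *ᵥ x) : 0 ≤ x := by
  have hneg : x⁻ = x⁺ - x := by
    nth_rw 3 [← posPart_sub_negPart x]
    rw [sub_sub_self]
  have hle : x⁻ ⬝ᵥ (A *ᵥ x⁻) ≤ 0 := by
    have hcross := dotProduct_mulVec_nonpos_of_mul_eq_zero hZ (negPart_nonneg x)
      (posPart_nonneg x) fun k => by simp [Pi.posPart_apply, le_total]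
    have hpos : 0 ≤ x⁻ ⬝ᵥ (A *ᵥ x) :=
      Finset.sum_nonneg fun k _ => mul_nonneg (negPart_nonneg x k) (hx k)
    nth_rw 2 [hneg]
    rw [mulVec_sub, dotProduct_sub]
    linarith
  refine negPart_eq_zero.mp (not_not.mp fun hne => ?_)
  have := hA.dotProduct_mulVec_pos hne
  rw [star_trivial] at this
  linarith

variable [DecidableEq n]

theorem PosDef.inv_apply_nonneg {A : Matrix n n ℝ} (hA : A.PosDef)
    (hZ : ∀ k l, k ≠ l → A k l ≤ 0) (k l : n) : 0 ≤ A⁻¹ k l := by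
  have hcol : A *ᵥ (A⁻¹ *ᵥ Pi.single l 1) = Pi.single l 1 := by
    rw [mulVec_mulVec, mul_nonsing_inv A ((isUnit_iff_isUnit_det A).mp hA.isUnit),
      one_mulVec]
  have := hA.nonneg_of_mulVec_nonneg_s8 hZ (hcol ▸ Pi.single_nonneg.mpr zero_le_one) k
  rwa [mulVec_single_one] at this

end ZMatrix

theorem PosDef.add_diagonal_inv {n : Type*} [DecidableEq n] {S : Matrix n n ℝ} (hS : S.PosDef)
    {p : n → ℝ} (hp : ∀ k, 0 < p k) : (S + diagonal p⁻¹).PosDef :=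
  hS.add (posDef_diagonal_iff.mpr fun k => inv_pos.mpr (hp k))

variable {n : Type*} [Fintype n] [DecidableEq n]

section Signs

theorem inv_add_diagonal_eq {S : Matrix n n ℝ} (hS : IsUnit S.det) {p : n → ℝ}
    (hp : ∀ k, p k ≠ 0) (hSp : IsUnit (S + diagonal p⁻¹).det) :
    (S⁻¹ + diagonal p)⁻¹ = diagonal p⁻¹ * (S + diagonal p⁻¹)⁻¹ * S := by
  refine inv_eq_right_inv ?_
  have hD : diagonal p * diagonal p⁻¹ = 1 := by
    rw [diagonal_mul_diagonal, ← diagonal_one]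
    exact congrArg diagonal (funext fun k => mul_inv_cancel₀ (hp k))
  calc (S⁻¹ + diagonal p) * (diagonal p⁻¹ * (S + diagonal p⁻¹)⁻¹ * S)
      = (S⁻¹ * diagonal p⁻¹ + diagonal p * diagonal p⁻¹) * (S + diagonal p⁻¹)⁻¹ * S := by
        noncomm_ring
    _ = S⁻¹ * ((S + diagonal p⁻¹) * (S + diagonal p⁻¹)⁻¹) * S := by
        rw [hD, ← nonsing_inv_mul S hS]; noncomm_ring
    _ = 1 := by rw [mul_nonsing_inv _ hSp, mul_one, nonsing_inv_mul S hS]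

variable {S : Matrix n n ℝ}

theorem PosDef.inv_add_diagonal (hS : S.PosDef) {p : n → ℝ} (hp : 0 ≤ p) :
    (S⁻¹ + diagonal p).PosDef :=
  hS.inv.add_posSemidef (posSemidef_diagonal_iff.mpr hp)

theorem inv_add_diagonal_eq_of_pos (hS : S.PosDef) {p : n → ℝ} (hp : ∀ k, 0 < p k) :
    (S⁻¹ + diagonal p)⁻¹ = diagonal p⁻¹ * (S + diagonal p⁻¹)⁻¹ * S :=
  inv_add_diagonal_eq ((isUnit_iff_isUnit_det S).mp hS.isUnit) (fun k => (hp k).ne')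
    ((isUnit_iff_isUnit_det _).mp (hS.add_diagonal_inv hp).isUnit)

theorem inv_add_diagonal_inv_apply_nonneg (hS : S.PosDef) (hZ : ∀ k l, k ≠ l → S k l ≤ 0)
    {p : n → ℝ} (hp : ∀ k, 0 < p k) (k l : n) : 0 ≤ (S + diagonal p⁻¹)⁻¹ k l := by
  refine (hS.add_diagonal_inv hp).inv_apply_nonneg (fun k l hkl => ?_) k l
  rw [add_apply, diagonal_apply_ne _ hkl, add_zero]
  exact hZ k l hkl

theorem inv_add_diagonal_apply_nonpos_of_pos (hS : S.PosDef) (hZ : ∀ k l, k ≠ l → S k l ≤ 0)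
    {p : n → ℝ} (hp : ∀ k, 0 < p k) {k l : n} (hkl : k ≠ l) :
    (S⁻¹ + diagonal p)⁻¹ k l ≤ 0 := by
  have hNS : (S + diagonal p⁻¹)⁻¹ * S = 1 - (S + diagonal p⁻¹)⁻¹ * diagonal p⁻¹ := by
    rw [eq_sub_iff_add_eq, ← mul_add]
    exact nonsing_inv_mul _ ((isUnit_iff_isUnit_det _).mp (hS.add_diagonal_inv hp).isUnit)
  rw [inv_add_diagonal_eq_of_pos hS hp, mul_assoc, hNS, mul_sub, mul_one, sub_apply,
    diagonal_apply_ne _ hkl, ← mul_assoc, mul_diagonal, diagonal_mul, zero_sub, neg_nonpos]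
  exact mul_nonneg (mul_nonneg (inv_nonneg.mpr (hp k).le)
    (inv_add_diagonal_inv_apply_nonneg hS hZ hp k l)) (inv_nonneg.mpr (hp l).le)

theorem inv_add_diagonal_mulVec_nonneg_of_pos (hS : S.PosDef) (hZ : ∀ k l, k ≠ l → S k l ≤ 0)
    {α : n → ℝ} (hSα : 0 ≤ S *ᵥ α) {p : n → ℝ} (hp : ∀ k, 0 < p k) :
    0 ≤ (S⁻¹ + diagonal p)⁻¹ *ᵥ α := by
  rw [inv_add_diagonal_eq_of_pos hS hp, ← mulVec_mulVec, ← mulVec_mulVec]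
  exact fun k => (mulVec_diagonal p⁻¹ _ k).symm ▸ mul_nonneg (inv_nonneg.mpr (hp k).le)
    (mulVec_nonneg (inv_add_diagonal_inv_apply_nonneg hS hZ hp) hSα k)

theorem continuousAt_inv_add_diagonal (A : Matrix n n ℝ) {p : n → ℝ}
    (hp : IsUnit (A + diagonal p).det) : ContinuousAt (fun r => (A + diagonal r)⁻¹) p :=
  (continuousAt_matrix_inv _ (by simpa using continuousAt_inv₀ hp.ne_zero)).comp
    (continuous_const.add continuous_id.matrix_diagonal).continuousAt

theorem continuousAt_inv_add_diagonal_of_posDef (hS : S.PosDef) {p : n → ℝ} (hp : 0 ≤ p) :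
    ContinuousAt (fun r => (S⁻¹ + diagonal r)⁻¹) p :=
  continuousAt_inv_add_diagonal _ (hS.inv_add_diagonal hp).det_pos.ne'.isUnit

theorem inv_add_diagonal_apply_nonpos (hS : S.PosDef) (hZ : ∀ k l, k ≠ l → S k l ≤ 0)
    {p : n → ℝ} (hp : 0 ≤ p) {k l : n} (hkl : k ≠ l) : (S⁻¹ + diagonal p)⁻¹ k l ≤ 0 :=
  le_of_forall_pos_of_continuousAt (g := 0)
    (fun _ hr => ((continuous_apply l).comp (continuous_apply k)).continuousAt.comp
      (continuousAt_inv_add_diagonal_of_posDef hS hr))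
    (fun _ _ => continuousAt_const)
    (fun _ hr => inv_add_diagonal_apply_nonpos_of_pos hS hZ hr hkl) hp

theorem inv_add_diagonal_mulVec_nonneg (hS : S.PosDef) (hZ : ∀ k l, k ≠ l → S k l ≤ 0)
    {α : n → ℝ} (hSα : 0 ≤ S *ᵥ α) {p : n → ℝ} (hp : 0 ≤ p) :
    0 ≤ (S⁻¹ + diagonal p)⁻¹ *ᵥ α := fun k =>
  le_of_forall_pos_of_continuousAt (f := 0) (fun _ _ => continuousAt_const)
    (fun _ hr => (continuous_apply k).continuousAt.comp
      ((continuous_id.matrix_mulVec continuous_const).continuousAt.comp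
        (continuousAt_inv_add_diagonal_of_posDef hS hr)))
    (fun _ hr => inv_add_diagonal_mulVec_nonneg_of_pos hS hZ hSα hr k) hp

end Signs

section Derivative

theorem dotProduct_mul_diagonal_single_mul_mulVec (x y : n → ℝ) (M N : Matrix n n ℝ) (k : n) :
    x ⬝ᵥ ((M * diagonal (Pi.single k 1) * N) *ᵥ y) = (x ᵥ* M) k * (N *ᵥ y) k := by
  have hsingle : diagonal (Pi.single k 1) *ᵥ (N *ᵥ y) = Pi.single k ((N *ᵥ y) k) := by
    ext i
    rcases eq_or_ne i k with rfl | hik <;> simp [mulVec_diagonal, *]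
  rw [← mulVec_mulVec, ← mulVec_mulVec, dotProduct_mulVec, hsingle, dotProduct_single]

def dotProductMulVecₗ (x y : n → ℝ) : Matrix n n ℝ →ₗ[ℝ] ℝ where
  toFun M := x ⬝ᵥ (M *ᵥ y)
  map_add' M N := by rw [add_mulVec, dotProduct_add]
  map_smul' c M := by simp [smul_mulVec]

attribute [local instance] Matrix.linftyOpNormedRing Matrix.linftyOpNormedAlgebra

open ContinuousLinearMap in
theorem hasFDerivAt_inv_add_diagonal (A : Matrix n n ℝ) {p : n → ℝ}
    (hp : IsUnit (A + diagonal p).det) :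
    HasFDerivAt (fun r => (A + diagonal r)⁻¹)
      ((-mulLeftRight ℝ _ (A + diagonal p)⁻¹ (A + diagonal p)⁻¹).comp
        (diagonalLinearMap n ℝ ℝ).toContinuousLinearMap) p := by
  obtain ⟨u, hu⟩ := (isUnit_iff_isUnit_det _).mpr hp
  have hinv : ((u⁻¹ : (Matrix n n ℝ)ˣ) : Matrix n n ℝ) = (A + diagonal p)⁻¹ := by
    rw [← hu, coe_units_inv]
  have hring := hasFDerivAt_ringInverse (𝕜 := ℝ) u
  rw [hu, hinv] at hring
  simp_rw [nonsing_inv_eq_ringInverse] at hring ⊢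
  exact hring.comp p (((diagonalLinearMap n ℝ ℝ).toContinuousLinearMap.hasFDerivAt).const_add A)

theorem hasFDerivAt_dotProduct_inv_add_diagonal_mulVec (A : Matrix n n ℝ) (x y : n → ℝ)
    {p : n → ℝ} (hp : IsUnit (A + diagonal p).det) :
    HasFDerivAt (fun r => x ⬝ᵥ ((A + diagonal r)⁻¹ *ᵥ y))
      ((dotProductMulVecₗ x y).toContinuousLinearMap.comp
        ((-ContinuousLinearMap.mulLeftRight ℝ _ (A + diagonal p)⁻¹ (A + diagonal p)⁻¹).comp
          (diagonalLinearMap n ℝ ℝ).toContinuousLinearMap)) p :=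
  (dotProductMulVecₗ x y).toContinuousLinearMap.hasFDerivAt.comp p
    (hasFDerivAt_inv_add_diagonal A hp)

theorem fderiv_dotProduct_inv_add_diagonal_mulVec_single (A : Matrix n n ℝ) (x y : n → ℝ)
    {p : n → ℝ} (hp : IsUnit (A + diagonal p).det) (k : n) :
    fderiv ℝ (fun r => x ⬝ᵥ ((A + diagonal r)⁻¹ *ᵥ y)) p (Pi.single k 1) =
      -((x ᵥ* (A + diagonal p)⁻¹) k * ((A + diagonal p)⁻¹ *ᵥ y) k) := by
  rw [(hasFDerivAt_dotProduct_inv_add_diagonal_mulVec A x y hp).fderiv]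
  change x ⬝ᵥ ((-((A + diagonal p)⁻¹ * diagonal (Pi.single k 1) * (A + diagonal p)⁻¹)) *ᵥ y)
    = _
  rw [neg_mulVec, dotProduct_neg, dotProduct_mul_diagonal_single_mul_mulVec]

theorem fderiv_dotProduct_inv_add_diagonal_mulVec_self_single {A : Matrix n n ℝ} (hA : Aᵀ = A)
    (x : n → ℝ) {p : n → ℝ} (hp : IsUnit (A + diagonal p).det) (k : n) :
    fderiv ℝ (fun r => x ⬝ᵥ ((A + diagonal r)⁻¹ *ᵥ x)) p (Pi.single k 1) =
      -((A + diagonal p)⁻¹ *ᵥ x) k ^ 2 := by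
  have hsymm : ((A + diagonal p)⁻¹)ᵀ = (A + diagonal p)⁻¹ := by
    rw [transpose_nonsing_inv, transpose_add, diagonal_transpose, hA]
  rw [fderiv_dotProduct_inv_add_diagonal_mulVec_single A x x hp, ← hsymm, vecMul_transpose,
    hsymm, sq]

theorem fderiv_fderiv_dotProduct_inv_add_diagonal_mulVec_self {A : Matrix n n ℝ} (hA : Aᵀ = A)
    (x : n → ℝ) {p : n → ℝ} (hp : IsUnit (A + diagonal p).det) (i j : n) :
    fderiv ℝ (fun q => fderiv ℝ (fun r => x ⬝ᵥ ((A + diagonal r)⁻¹ *ᵥ x)) q (Pi.single i 1)) p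
        (Pi.single j 1) =
      2 * ((A + diagonal p)⁻¹ *ᵥ x) i * (A + diagonal p)⁻¹ i j *
        ((A + diagonal p)⁻¹ *ᵥ x) j := by
  have hdet : ∀ᶠ q in nhds p, IsUnit (A + diagonal q).det := by
    have hcont : Continuous fun q : n → ℝ => (A + diagonal q).det :=
      (continuous_const.add continuous_id.matrix_diagonal).matrix_det
    filter_upwards [hcont.continuousAt.eventually_ne hp.ne_zero] with q hq using hq.isUnit
  have hfirst : (fun q => fderiv ℝ (fun r => x ⬝ᵥ ((A + diagonal r)⁻¹ *ᵥ x)) q (Pi.single i 1))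
      =ᶠ[nhds p] fun q => -(Pi.single i 1 ⬝ᵥ ((A + diagonal q)⁻¹ *ᵥ x)) ^ 2 := by
    filter_upwards [hdet] with q hq
    rw [fderiv_dotProduct_inv_add_diagonal_mulVec_self_single hA x hq, single_dotProduct,
      one_mul]
  have hu := (hasFDerivAt_dotProduct_inv_add_diagonal_mulVec A (Pi.single i 1) x hp)
    |>.differentiableAt.hasFDerivAt
  rw [hfirst.fderiv_eq, (hu.pow 2).fun_neg.fderiv]
  simp only [_root_.neg_apply, _root_.smul_apply, smul_eq_mul]
  rw [fderiv_dotProduct_inv_add_diagonal_mulVec_single A _ x hp, single_one_vecMul]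
  simp only [single_dotProduct, one_mul, Nat.add_one_sub_one, pow_one, nsmul_eq_mul,
    Nat.cast_ofNat, row_apply, mul_neg, neg_neg]
  ring

end Derivative

end Matrix

theorem stmt_8_general {K : ℕ} (S : Matrix (Fin K) (Fin K) ℝ) (hS : S.PosDef)
    (hOff : ∀ i j, i ≠ j → S i j ≤ 0)
    (α : Fin K → ℝ)
    (hSα : ∀ i, 0 ≤ (S *ᵥ α) i)
    (q : Fin K → ℝ) (hq : ∀ i, 0 ≤ q i) (i j : Fin K) (hij : i ≠ j) :
    fderiv ℝ
        (fun p : Fin K → ℝ =>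
          fderiv ℝ (fun r : Fin K → ℝ => α ⬝ᵥ ((S⁻¹ + diagonal r)⁻¹ *ᵥ α)) p
            (Pi.single i 1))
        q (Pi.single j 1) ≤ 0 := by
  have hsymm : S⁻¹ᵀ = S⁻¹ := by
    rw [transpose_nonsing_inv, ← conjTranspose_eq_transpose_of_trivial, hS.isHermitian.eq]
  rw [fderiv_fderiv_dotProduct_inv_add_diagonal_mulVec_self hsymm α
    (hS.inv_add_diagonal hq).det_pos.ne'.isUnit]
  have hu := inv_add_diagonal_mulVec_nonneg hS hOff hSα hq
  have hM := inv_add_diagonal_apply_nonpos hS hOff hq hij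
  nlinarith [mul_nonneg (hu i) (hu j)]

theorem stmt_8 {K : ℕ} (S : Matrix (Fin K) (Fin K) ℝ) (hS : S.PosDef)
    (hOff : ∀ i j, i ≠ j → S i j ≤ 0)
    (α : Fin K → ℝ) (hα : ∀ i, 0 < α i)
    (hSα : ∀ i, 0 ≤ (S *ᵥ α) i)
    (q : Fin K → ℝ) (hq : ∀ i, 0 ≤ q i) (i j : Fin K) (hij : i ≠ j) :
    fderiv ℝ
        (fun p : Fin K → ℝ =>
          fderiv ℝ (fun r : Fin K → ℝ => α ⬝ᵥ ((S⁻¹ + diagonal r)⁻¹ *ᵥ α)) p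
            (Pi.single i 1))
        q (Pi.single j 1) ≤ 0 :=
  stmt_8_general S hS hOff α hSα q hq i j hij
end

section
/- Let Σ be a K×K symmetric positive-definite matrix with non-positive off-diagonal entries, α ∈ ℝ^K strictly positive with Σα ≥ 0 coordinatewise. Then for every q ∈ ℝ_{≥0}^K, the vector (Σ⁻¹ + diag(q))⁻¹α has non-negative coordinates. -/
/-!
Write `M = Σ⁻¹ + diag q` and `x = M⁻¹ α`. Since `Σ M = 1 + Σ diag q`, the vector `x` solves
`(1 + Σ diag q) x = Σ α ≥ 0`, so it suffices that `1 + Σ diag q` is inverse-monotone. This is a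
negative-part argument in the energy of the Z-matrix `Σ`: testing the equation against
`diag q x⁻` and using positive definiteness of `Σ` kills `diag q x⁻`, after which testing against
`x⁻` kills `x⁻`. The key point is that the coupling term `u ⬝ Σ v` of two nonnegative vectors with
disjoint supports is `≤ 0`, because only off-diagonal entries of `Σ` contribute.
-/

open Matrix

section PosNegPart

variable {R : Type*} [Ring R] [LinearOrder R] [IsOrderedRing R]

theorem posPart_mul_negPart_eq_zero (a : R) : a⁺ * a⁻ = 0 := by
  rcases le_total a 0 with h | h
  · rw [posPart_eq_zero.2 h, zero_mul]
  · rw [negPart_eq_zero.2 h, mul_zero]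

theorem negPart_mul_self (a : R) : a⁻ * a = -(a⁻ * a⁻) := by
  rcases le_total a 0 with h | h
  · rw [negPart_eq_neg.2 h, neg_mul_neg, neg_mul]
  · rw [negPart_eq_zero.2 h, zero_mul, zero_mul, neg_zero]

end PosNegPart

namespace Matrix

variable {n : Type*} [Fintype n]

theorem dotProduct_mulVec_nonpos_of_mul_eq_zero_s9 {R : Type*} [CommRing R] [PartialOrder R]
    [IsOrderedRing R] {A : Matrix n n R} (hA : ∀ i j, i ≠ j → A i j ≤ 0) {u v : n → R}
    (hu : 0 ≤ u) (hv : 0 ≤ v) (huv : ∀ i, u i * v i = 0) : u ⬝ᵥ (A *ᵥ v) ≤ 0 := by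
  refine Finset.sum_nonpos fun i _ => ?_
  rw [mulVec, dotProduct, Finset.mul_sum]
  refine Finset.sum_nonpos fun j _ => ?_
  rcases eq_or_ne i j with rfl | hij
  · rw [mul_left_comm, huv, mul_zero]
  · exact mul_nonpos_of_nonneg_of_nonpos (hu i)
      (mul_nonpos_of_nonpos_of_nonneg (hA i j hij) (hv j))

theorem diagonal_mulVec_eq_mul {R : Type*} [NonUnitalNonAssocSemiring R] [DecidableEq n]
    (d v : n → R) : diagonal d *ᵥ v = d * v :=
  funext (mulVec_diagonal d v)

variable [DecidableEq n] {S : Matrix n n ℝ} {d x : n → ℝ}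

theorem PosDef.mul_negPart_eq_zero (hS : S.PosDef) (hOff : ∀ i j, i ≠ j → S i j ≤ 0)
    (hd : 0 ≤ d) (hx : 0 ≤ (1 + S * diagonal d) *ᵥ x) : d * x⁻ = 0 := by
  have hw : 0 ≤ d * x⁻ := mul_nonneg hd (negPart_nonneg x)
  have hdisj : ∀ i, (d * x⁻) i * (d * x⁺) i = 0 := fun i => by
    rw [Pi.mul_apply, Pi.mul_apply, mul_mul_mul_comm, mul_comm (x⁻ i),
      Pi.posPart_apply, Pi.negPart_apply, posPart_mul_negPart_eq_zero, mul_zero]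
  have hwx : (d * x⁻) ⬝ᵥ x ≤ 0 := Finset.sum_nonpos fun i _ => by
    rw [Pi.mul_apply, Pi.negPart_apply, mul_assoc, negPart_mul_self, mul_neg]
    exact neg_nonpos.2 (mul_nonneg (hd i) (mul_self_nonneg _))
  have hexpand : (1 + S * diagonal d) *ᵥ x = x + S *ᵥ (d * x⁺) - S *ᵥ (d * x⁻) := by
    rw [add_mulVec, one_mulVec, ← mulVec_mulVec, diagonal_mulVec_eq_mul, add_sub_assoc,
      ← mulVec_sub, ← mul_sub, posPart_sub_negPart]
  have htest := dotProduct_nonneg_of_nonneg hw hx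
  rw [hexpand, dotProduct_sub, dotProduct_add] at htest
  by_contra hne
  have hpos := hS.dotProduct_mulVec_pos hne
  rw [star_trivial] at hpos
  linarith [dotProduct_mulVec_nonpos_of_mul_eq_zero_s9 hOff hw
    (mul_nonneg hd (posPart_nonneg x)) hdisj]

theorem PosDef.nonneg_of_one_add_mul_diagonal_mulVec_nonneg (hS : S.PosDef)
    (hOff : ∀ i j, i ≠ j → S i j ≤ 0) (hd : 0 ≤ d) (hx : 0 ≤ (1 + S * diagonal d) *ᵥ x) :
    0 ≤ x := by
  have hDx : diagonal d *ᵥ x = d * x⁺ := by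
    rw [diagonal_mulVec_eq_mul, ← sub_zero (d * x⁺), ← hS.mul_negPart_eq_zero hOff hd hx,
      ← mul_sub, posPart_sub_negPart]
  have hdisj : ∀ i, x⁻ i * (d * x⁺) i = 0 := fun i => by
    rw [Pi.mul_apply, mul_left_comm, mul_comm (x⁻ i), Pi.posPart_apply,
      Pi.negPart_apply, posPart_mul_negPart_eq_zero, mul_zero]
  have hself : x⁻ ⬝ᵥ x = -(x⁻ ⬝ᵥ x⁻) := by
    simp only [dotProduct, Pi.negPart_apply, negPart_mul_self, Finset.sum_neg_distrib]
  have htest := dotProduct_nonneg_of_nonneg (negPart_nonneg x) hx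
  rw [add_mulVec, one_mulVec, ← mulVec_mulVec, hDx, dotProduct_add, hself] at htest
  have hcoupling := dotProduct_mulVec_nonpos_of_mul_eq_zero_s9 hOff (negPart_nonneg x)
    (mul_nonneg hd (posPart_nonneg x)) hdisj
  have hzero : x⁻ = 0 :=
    dotProduct_self_eq_zero.1 (le_antisymm (by linarith) (dotProduct_self_star_nonneg _))
  exact negPart_eq_zero.1 hzero

end Matrix

theorem stmt_9_general {K : ℕ} (S : Matrix (Fin K) (Fin K) ℝ) (hS : S.PosDef)
    (hOff : ∀ i j, i ≠ j → S i j ≤ 0)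
    (α : Fin K → ℝ)
    (hSα : ∀ i, 0 ≤ (S *ᵥ α) i)
    (q : Fin K → ℝ) (hq : ∀ i, 0 ≤ q i) :
    ∀ i, 0 ≤ ((S⁻¹ + diagonal q)⁻¹ *ᵥ α) i := by
  have hM : (S⁻¹ + diagonal q).PosDef :=
    hS.inv.add_posSemidef (posSemidef_diagonal_iff.2 hq)
  have hfactor : 1 + S * diagonal q = S * (S⁻¹ + diagonal q) := by
    rw [mul_add, mul_nonsing_inv _ hS.det_pos.ne'.isUnit]
  have hsolve : (1 + S * diagonal q) *ᵥ ((S⁻¹ + diagonal q)⁻¹ *ᵥ α) = S *ᵥ α := by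
    rw [hfactor, mulVec_mulVec, mul_assoc, mul_nonsing_inv _ hM.det_pos.ne'.isUnit, mul_one]
  exact hS.nonneg_of_one_add_mul_diagonal_mulVec_nonneg hOff hq (hsolve ▸ hSα)

theorem stmt_9 {K : ℕ} (S : Matrix (Fin K) (Fin K) ℝ) (hS : S.PosDef)
    (hOff : ∀ i j, i ≠ j → S i j ≤ 0)
    (α : Fin K → ℝ) (hα : ∀ i, 0 < α i)
    (hSα : ∀ i, 0 ≤ (S *ᵥ α) i)
    (q : Fin K → ℝ) (hq : ∀ i, 0 ≤ q i) :
    ∀ i, 0 ≤ ((S⁻¹ + diagonal q)⁻¹ *ᵥ α) i :=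
  stmt_9_general S hS hOff α hSα q hq
end

section
/- Let Σ be a K×K symmetric positive-definite matrix (K ≥ 2) and suppose that for some fixed strictly positive α ∈ ℝ^K and for every q ∈ ℝ_{≥0}^K and every pair i ≠ j the cross-partial of V(q) = αᵀ(Σ⁻¹ + diag(q))⁻¹α satisfies ∂²V/∂q_i∂q_j (q) ≥ 0. Then Σ⁻¹ has non-positive off-diagonal entries. -/
/-!
Write `A = Σ⁻¹` and `G q = (A + diagonal q)⁻¹`. Since `dG = -G (diagonal dq) G`, the cross
partial of `V q = αᵀ G q α` is `2 (G α)ᵢ Gᵢⱼ (G α)ⱼ`. Along the ray `q = t • 1` we have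
`t G = (1 + t⁻¹ A)⁻¹ → 1`, while `G (A + t) = 1` gives `t Gᵢⱼ = -(G A)ᵢⱼ` for `i ≠ j`; hence
`t⁴` times the cross partial tends to `-2 αᵢ Aᵢⱼ αⱼ`, which must therefore be `≥ 0`.
-/

open Matrix Filter Topology

-- any norm on matrices will do: it only serves to differentiate `Ring.inverse`
attribute [local instance] Matrix.linftyOpNormedAddCommGroup Matrix.linftyOpNormedSpace
  Matrix.linftyOpNormedRing Matrix.linftyOpNormedAlgebra

variable {ι : Type*} [Fintype ι] [DecidableEq ι]

theorem hasFDerivAt_inv_add_diagonal (A : Matrix ι ι ℝ) {q : ι → ℝ}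
    (hq : IsUnit (A + diagonal q)) :
    HasFDerivAt (fun r => (A + diagonal r)⁻¹)
      ((-ContinuousLinearMap.mulLeftRight ℝ _ (A + diagonal q)⁻¹ (A + diagonal q)⁻¹).comp
        (diagonalLinearMap ι ℝ ℝ).toContinuousLinearMap) q := by
  have hinv := hasFDerivAt_ringInverse (𝕜 := ℝ) hq.unit
  rw [coe_units_inv, IsUnit.unit_spec] at hinv
  have hM : HasFDerivAt (fun r => A + diagonal r)
      (diagonalLinearMap ι ℝ ℝ).toContinuousLinearMap q :=
    (diagonalLinearMap ι ℝ ℝ).toContinuousLinearMap.hasFDerivAt.const_add A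
  simpa only [nonsing_inv_eq_ringInverse, Function.comp_def] using hinv.comp q hM

theorem hasFDerivAt_dotProduct_inv_add_diagonal_mulVec (A : Matrix ι ι ℝ) (x y : ι → ℝ)
    {q : ι → ℝ} (hq : IsUnit (A + diagonal q)) :
    HasFDerivAt (fun r => x ⬝ᵥ ((A + diagonal r)⁻¹ *ᵥ y))
      (-∑ k, ((x ᵥ* (A + diagonal q)⁻¹) k * ((A + diagonal q)⁻¹ *ᵥ y) k) •
        ContinuousLinearMap.proj (R := ℝ) (φ := fun _ : ι => ℝ) k) q := by
  let ℓ : Matrix ι ι ℝ →L[ℝ] ℝ := LinearMap.toContinuousLinearMap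
    { toFun := fun X => x ⬝ᵥ (X *ᵥ y)
      map_add' := fun X Y => by simp [add_mulVec, dotProduct_add]
      map_smul' := fun c X => by simp [smul_mulVec] }
  refine (ℓ.hasFDerivAt.comp q (hasFDerivAt_inv_add_diagonal A hq)).congr_fderiv ?_
  ext v
  change x ⬝ᵥ (-((A + diagonal q)⁻¹ * diagonal v * (A + diagonal q)⁻¹) *ᵥ y) = _
  rw [neg_mulVec, dotProduct_neg, ← mulVec_mulVec, ← mulVec_mulVec, dotProduct_mulVec]
  simp [dotProduct, mulVec_diagonal]
  exact Finset.sum_congr rfl fun k _ => by ring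

theorem fderiv_dotProduct_inv_add_diagonal_mulVec_single (A : Matrix ι ι ℝ) (x y : ι → ℝ)
    {q : ι → ℝ} (hq : IsUnit (A + diagonal q)) (k : ι) :
    fderiv ℝ (fun r => x ⬝ᵥ ((A + diagonal r)⁻¹ *ᵥ y)) q (Pi.single k 1) =
      -((x ᵥ* (A + diagonal q)⁻¹) k * ((A + diagonal q)⁻¹ *ᵥ y) k) := by
  simp [(hasFDerivAt_dotProduct_inv_add_diagonal_mulVec A x y hq).fderiv, Pi.single_apply]

theorem isOpen_setOf_isUnit_add_diagonal (A : Matrix ι ι ℝ) :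
    IsOpen {q : ι → ℝ | IsUnit (A + diagonal q)} := by
  simp only [isUnit_iff_isUnit_det, isUnit_iff_ne_zero]
  exact isOpen_ne_fun (by fun_prop) continuous_const

theorem fderiv_fderiv_dotProduct_inv_add_diagonal_mulVec {A : Matrix ι ι ℝ} (hA : A.IsSymm)
    (α : ι → ℝ) {q : ι → ℝ} (hq : IsUnit (A + diagonal q)) (i j : ι) :
    fderiv ℝ (fun p => fderiv ℝ (fun r => α ⬝ᵥ ((A + diagonal r)⁻¹ *ᵥ α)) p (Pi.single i 1)) q
        (Pi.single j 1) =
      2 * (((A + diagonal q)⁻¹ *ᵥ α) i * (A + diagonal q)⁻¹ i j * ((A + diagonal q)⁻¹ *ᵥ α) j) := by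
  set φ : (ι → ℝ) → ℝ := fun p => Pi.single i 1 ⬝ᵥ ((A + diagonal p)⁻¹ *ᵥ α)
  have hfirst : (fun p => fderiv ℝ (fun r => α ⬝ᵥ ((A + diagonal r)⁻¹ *ᵥ α)) p (Pi.single i 1))
      =ᶠ[𝓝 q] fun p => -(φ p * φ p) := by
    filter_upwards [(isOpen_setOf_isUnit_add_diagonal A).mem_nhds hq] with p hp
    have hsymm : ((A + diagonal p)⁻¹)ᵀ = (A + diagonal p)⁻¹ := (hA.add (isSymm_diagonal p)).inv
    rw [fderiv_dotProduct_inv_add_diagonal_mulVec_single A α α hp, ← hsymm, vecMul_transpose,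
      hsymm]
    simp [φ]
  have hφ := hasFDerivAt_dotProduct_inv_add_diagonal_mulVec A (Pi.single i 1) α hq
  rw [hfirst.fderiv_eq, (hφ.fun_mul hφ).fun_neg.fderiv]
  simp [Pi.single_apply]
  ring

theorem inv_add_diagonal_const_inv {K : Type*} [Field K] (A : Matrix ι ι K) {u : K} (hu : u ≠ 0)
    (h : IsUnit (1 + u • A)) : (A + diagonal fun _ => u⁻¹)⁻¹ = u • (1 + u • A)⁻¹ := by
  have hscale : A + diagonal (fun _ => u⁻¹) = u⁻¹ • (1 + u • A) := by
    rw [← smul_one_eq_diagonal, smul_add, smul_smul, inv_mul_cancel₀ hu, one_smul, add_comm]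
  refine inv_eq_left_inv ?_
  rw [hscale, smul_mul_smul, mul_inv_cancel₀ hu, one_smul,
    nonsing_inv_mul _ ((isUnit_iff_isUnit_det _).1 h)]

theorem inv_one_add_smul_apply_of_ne {R : Type*} [CommRing R] (A : Matrix ι ι R) {u : R}
    (h : IsUnit (1 + u • A)) {i j : ι} (hij : i ≠ j) :
    (1 + u • A)⁻¹ i j = -(u * ((1 + u • A)⁻¹ * A) i j) := by
  have hinv : (1 + u • A)⁻¹ + u • ((1 + u • A)⁻¹ * A) = 1 := by
    rw [← mul_smul_comm, ← mul_one (1 + u • A)⁻¹, mul_assoc, one_mul, ← mul_add,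
      nonsing_inv_mul _ ((isUnit_iff_isUnit_det _).1 h)]
  have := congrFun (congrFun hinv i) j
  simp only [Matrix.add_apply, Matrix.smul_apply, smul_eq_mul, one_apply_ne hij] at this
  linear_combination this

theorem continuousAt_inv_one_add_smul (A : Matrix ι ι ℝ) :
    ContinuousAt (fun u : ℝ => (1 + u • A)⁻¹) 0 := by
  refine (continuousAt_matrix_inv _ ?_).comp (f := fun u : ℝ => 1 + u • A) (by fun_prop)
  simp [Ring.inverse_eq_inv', continuousAt_inv₀ one_ne_zero]

theorem apply_mul_apply_nonpos_of_fderiv_fderiv_nonneg {A : Matrix ι ι ℝ} (hA : A.PosDef)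
    (α : ι → ℝ) {i j : ι} (hij : i ≠ j)
    (h : ∀ t : ℝ, 0 < t → 0 ≤ fderiv ℝ (fun p => fderiv ℝ (fun r => α ⬝ᵥ ((A + diagonal r)⁻¹ *ᵥ α))
      p (Pi.single i 1)) (fun _ => t) (Pi.single j 1)) :
    α i * A i j * α j ≤ 0 := by
  set c : ℝ → Matrix ι ι ℝ := fun u => (1 + u • A)⁻¹
  set F : ℝ → ℝ := fun u => (c u *ᵥ α) i * (c u * A) i j * (c u *ᵥ α) j
  have hF : ∀ u, 0 < u → F u ≤ 0 := by
    intro u hu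
    have hunit : IsUnit (1 + u • A) := (PosDef.one.add (hA.smul hu)).isUnit
    have hq : IsUnit (A + diagonal fun _ => u⁻¹) :=
      (hA.add_posSemidef (posSemidef_diagonal_iff.2 fun _ => (inv_pos.2 hu).le)).isUnit
    -- at `q = u⁻¹ • 1` the cross partial is `-2 u ^ 4 * F u`
    have := h u⁻¹ (inv_pos.2 hu)
    rw [fderiv_fderiv_dotProduct_inv_add_diagonal_mulVec (isHermitian_iff_isSymm.1 hA.isHermitian)
      α hq, inv_add_diagonal_const_inv A hu.ne' hunit, Matrix.smul_apply,
      inv_one_add_smul_apply_of_ne A hunit hij] at this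
    simp only [smul_mulVec, Pi.smul_apply, smul_eq_mul] at this
    refine nonpos_of_mul_nonpos_right (a := 2 * u ^ 4) ?_ (by positivity)
    linear_combination this
  have hcont : ContinuousAt F 0 :=
    (by fun_prop : Continuous fun M : Matrix ι ι ℝ => (M *ᵥ α) i * (M * A) i j * (M *ᵥ α) j)
      |>.continuousAt.comp (continuousAt_inv_one_add_smul A)
  have hF0 : F 0 = α i * A i j * α j := by simp [F, c]
  rw [← hF0]
  exact le_of_tendsto (hcont.tendsto.mono_left (nhdsWithin_le_nhds (s := Set.Ioi 0)))
    (eventually_nhdsWithin_of_forall hF)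

theorem stmt_10_general {K : ℕ} (S : Matrix (Fin K) (Fin K) ℝ) (hS : S.PosDef)
    (α : Fin K → ℝ) (hα : ∀ i, 0 < α i)
    (hsub : ∀ q : Fin K → ℝ, (∀ i, 0 ≤ q i) → ∀ i j : Fin K, i ≠ j →
      0 ≤ fderiv ℝ
          (fun p : Fin K → ℝ =>
            fderiv ℝ (fun r : Fin K → ℝ => α ⬝ᵥ ((S⁻¹ + diagonal r)⁻¹ *ᵥ α)) p
              (Pi.single i 1))
          q (Pi.single j 1)) :
    ∀ i j : Fin K, i ≠ j → S⁻¹ i j ≤ 0 := by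
  intro i j hij
  have h := apply_mul_apply_nonpos_of_fderiv_fderiv_nonneg hS.inv α hij
    fun t ht => hsub _ (fun _ => ht.le) i j hij
  rw [mul_right_comm] at h
  exact nonpos_of_mul_nonpos_right h (mul_pos (hα i) (hα j))

theorem stmt_10 {K : ℕ} (hK : 2 ≤ K) (S : Matrix (Fin K) (Fin K) ℝ) (hS : S.PosDef)
    (α : Fin K → ℝ) (hα : ∀ i, 0 < α i)
    (hsub : ∀ q : Fin K → ℝ, (∀ i, 0 ≤ q i) → ∀ i j : Fin K, i ≠ j →
      0 ≤ fderiv ℝ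
          (fun p : Fin K → ℝ =>
            fderiv ℝ (fun r : Fin K → ℝ => α ⬝ᵥ ((S⁻¹ + diagonal r)⁻¹ *ᵥ α)) p
              (Pi.single i 1))
          q (Pi.single j 1)) :
    ∀ i j : Fin K, i ≠ j → S⁻¹ i j ≤ 0 :=
  stmt_10_general S hS α hα hsub
end

section
/- Let K = 2, Σ a symmetric positive-definite 2×2 matrix, α₁, α₂ > 0, and set cov_i = α_i Σ_{ii} + α_j Σ_{ji} (j ≠ i), x_i = α_i det(Σ). Assume cov₁ + cov₂ ≥ 0 and cov₁ ≥ cov₂. Then for all t ≤ t₁* := (cov₁ − cov₂)/x₂, the unique minimizer of V(q₁,q₂) = αᵀ(Σ⁻¹ + diag(q))⁻¹α over {q ≥ 0 : q₁ + q₂ = t} is (t, 0). -/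
/-! Write `A = Σ⁻¹ + diag(t, 0)` and move the attention `u = q₂` from the first coordinate to the
second, `B = A + diag(-u, u)`. With `w = adj(A) α` and `N = αᵀ w > 0`, a `2 × 2` computation gives
`det A · det B · (V(B) - V(A)) = u (w₁² - w₂²) + N u²`.
Since `adj(Σ⁻¹) = Σ / det Σ`, one has `w = (cov₁ / det Σ, cov₂ / det Σ + t α₂)`, and `w₂² ≤ w₁²`
follows from `cov₁ + cov₂ ≥ 0` and `t ≤ t₁*`. Hence `V(B) ≥ V(A)`, with equality only for `u = 0`. -/

open Matrix

theorem dotProduct_inv_mulVec_eq_div {n K : Type*} [Fintype n] [DecidableEq n] [Field K]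
    (A : Matrix n n K) (v : n → K) :
    v ⬝ᵥ (A⁻¹ *ᵥ v) = v ⬝ᵥ (adjugate A *ᵥ v) / A.det := by
  rw [inv_def, Ring.inverse_eq_inv', smul_mulVec, dotProduct_smul, smul_eq_mul, div_eq_inv_mul]

theorem Matrix.PosDef.inv_add_diagonal_s12 {n : Type*} [Fintype n] [DecidableEq n]
    {S : Matrix n n ℝ} (hS : S.PosDef) {d : n → ℝ} (hd : 0 ≤ d) : (S⁻¹ + diagonal d).PosDef :=
  hS.inv.add_posSemidef (PosSemidef.diagonal hd)

theorem adjugate_inv_fin_two {K : Type*} [Field K] (S : Matrix (Fin 2) (Fin 2) K) :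
    adjugate S⁻¹ = S.det⁻¹ • S := by
  rw [inv_def, Ring.inverse_eq_inv', adjugate_smul, adjugate_adjugate _ (by simp)]
  simp

theorem adjugate_add_diagonal_fin_two {R : Type*} [CommRing R] (M : Matrix (Fin 2) (Fin 2) R)
    (x y : R) : adjugate (M + diagonal ![x, y]) = adjugate M + diagonal ![y, x] := by
  ext i j
  fin_cases i <;> fin_cases j <;> simp [adjugate_fin_two]

theorem adjugate_inv_add_diagonal_mulVec {K : Type*} [Field K] (S : Matrix (Fin 2) (Fin 2) K)
    (hS : S 1 0 = S 0 1) (t : K) (v : Fin 2 → K) :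
    adjugate (S⁻¹ + diagonal ![t, 0]) *ᵥ v
      = ![(v 0 * S 0 0 + v 1 * S 1 0) / S.det, (v 1 * S 1 1 + v 0 * S 0 1) / S.det + t * v 1] := by
  rw [adjugate_add_diagonal_fin_two, adjugate_inv_fin_two]
  ext i
  fin_cases i <;> simp [mulVec, dotProduct, Fin.sum_univ_two, hS] <;> ring

theorem det_mul_dotProduct_adjugate_shift {R : Type*} [CommRing R] (A : Matrix (Fin 2) (Fin 2) R)
    (hA : A 1 0 = A 0 1) (u : R) (v : Fin 2 → R) :
    v ⬝ᵥ (adjugate (A + diagonal ![-u, u]) *ᵥ v) * A.det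
        - v ⬝ᵥ (adjugate A *ᵥ v) * (A + diagonal ![-u, u]).det
      = u * ((adjugate A *ᵥ v) 0 ^ 2 - (adjugate A *ᵥ v) 1 ^ 2) + v ⬝ᵥ (adjugate A *ᵥ v) * u ^ 2 := by
  simp [adjugate_fin_two, det_fin_two, dotProduct, mulVec, Fin.sum_univ_two, hA]
  ring

theorem dotProduct_inv_mulVec_shift_sub {K : Type*} [Field K] (A : Matrix (Fin 2) (Fin 2) K)
    (hA : A 1 0 = A 0 1) (hA₀ : A.det ≠ 0) (u : K) (hB₀ : (A + diagonal ![-u, u]).det ≠ 0)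
    (v : Fin 2 → K) :
    v ⬝ᵥ ((A + diagonal ![-u, u])⁻¹ *ᵥ v) - v ⬝ᵥ (A⁻¹ *ᵥ v)
      = (u * ((adjugate A *ᵥ v) 0 ^ 2 - (adjugate A *ᵥ v) 1 ^ 2)
          + v ⬝ᵥ (adjugate A *ᵥ v) * u ^ 2) / (A.det * (A + diagonal ![-u, u]).det) := by
  rw [← det_mul_dotProduct_adjugate_shift A hA, dotProduct_inv_mulVec_eq_div,
    dotProduct_inv_mulVec_eq_div]
  field_simp

theorem dotProduct_inv_mulVec_le_shift (A : Matrix (Fin 2) (Fin 2) ℝ) (hA : A.PosDef) {u : ℝ}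
    (hu : 0 ≤ u) (hB : (A + diagonal ![-u, u]).PosDef) {v : Fin 2 → ℝ} (hv : v ≠ 0)
    (hw : (adjugate A *ᵥ v) 1 ^ 2 ≤ (adjugate A *ᵥ v) 0 ^ 2) :
    v ⬝ᵥ (A⁻¹ *ᵥ v) ≤ v ⬝ᵥ ((A + diagonal ![-u, u])⁻¹ *ᵥ v) ∧
      (v ⬝ᵥ ((A + diagonal ![-u, u])⁻¹ *ᵥ v) ≤ v ⬝ᵥ (A⁻¹ *ᵥ v) → u = 0) := by
  have hdetA := hA.det_pos
  have hdetB := hB.det_pos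
  have hN : 0 < v ⬝ᵥ (adjugate A *ᵥ v) := by
    have h := hA.inv.dotProduct_mulVec_pos hv
    rwa [star_trivial, dotProduct_inv_mulVec_eq_div, div_pos_iff_of_pos_right hdetA] at h
  have hsub := dotProduct_inv_mulVec_shift_sub A (by simpa using congrFun (congrFun hA.1 0) 1)
    hdetA.ne' u hdetB.ne' v
  have hnum : 0 ≤ u * ((adjugate A *ᵥ v) 0 ^ 2 - (adjugate A *ᵥ v) 1 ^ 2) :=
    mul_nonneg hu (sub_nonneg.2 hw)
  have hden := mul_pos hdetA hdetB
  refine ⟨sub_nonneg.1 (hsub ▸ div_nonneg (add_nonneg hnum (by positivity)) hden.le), fun hle => ?_⟩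
  by_contra hu0
  have : 0 < v ⬝ᵥ ((A + diagonal ![-u, u])⁻¹ *ᵥ v) - v ⬝ᵥ (A⁻¹ *ᵥ v) :=
    hsub ▸ div_pos (add_pos_of_nonneg_of_pos hnum (by positivity)) hden
  linarith

theorem stmt_12_general (S : Matrix (Fin 2) (Fin 2) ℝ) (hS : S.PosDef)
    (α : Fin 2 → ℝ) (hα : ∀ i, 0 < α i)
    (cov1 cov2 : ℝ)
    (hcov1 : cov1 = α 0 * S 0 0 + α 1 * S 1 0)
    (hcov2 : cov2 = α 1 * S 1 1 + α 0 * S 0 1)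
    (hsum : 0 ≤ cov1 + cov2)
    (t : ℝ) (ht : t ≤ (cov1 - cov2) / (α 1 * S.det)) :
    ∀ q : Fin 2 → ℝ, (∀ i, 0 ≤ q i) → q 0 + q 1 = t →
      α ⬝ᵥ ((S⁻¹ + diagonal ![t, 0])⁻¹ *ᵥ α) ≤ α ⬝ᵥ ((S⁻¹ + diagonal q)⁻¹ *ᵥ α) ∧
      (α ⬝ᵥ ((S⁻¹ + diagonal q)⁻¹ *ᵥ α) ≤ α ⬝ᵥ ((S⁻¹ + diagonal ![t, 0])⁻¹ *ᵥ α) →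
        q = ![t, 0]) := by
  intro q hq hqt
  have ht0 : 0 ≤ t := hqt ▸ add_nonneg (hq 0) (hq 1)
  have hdiag : diagonal ![t, 0] + diagonal ![-q 1, q 1] = diagonal q := by
    rw [diagonal_add]
    congr 1
    ext i
    fin_cases i <;> simp [← hqt]
  have hA : (S⁻¹ + diagonal ![t, 0]).PosDef :=
    hS.inv_add_diagonal_s12 fun i => by fin_cases i <;> simp [ht0]
  have hB : (S⁻¹ + diagonal ![t, 0] + diagonal ![-q 1, q 1]).PosDef :=
    add_assoc S⁻¹ _ _ ▸ hdiag ▸ hS.inv_add_diagonal_s12 hq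
  have hadj : adjugate (S⁻¹ + diagonal ![t, 0]) *ᵥ α = ![cov1 / S.det, cov2 / S.det + t * α 1] := by
    rw [adjugate_inv_add_diagonal_mulVec S (by simpa using congrFun (congrFun hS.1 0) 1), hcov1,
      hcov2]
  have hΔ := hS.det_pos
  have hdom : (cov2 / S.det + t * α 1) ^ 2 ≤ (cov1 / S.det) ^ 2 := by
    have htα : t * α 1 ≤ (cov1 - cov2) / S.det := by
      rw [le_div_iff₀ hΔ, mul_assoc]
      exact (le_div_iff₀ (mul_pos (hα 1) hΔ)).1 ht
    apply sq_le_sq'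
    · have hsum' := div_nonneg hsum hΔ.le
      rw [add_div] at hsum'
      linarith [mul_nonneg ht0 (hα 1).le]
    · rw [sub_div] at htα
      linarith
  obtain ⟨hle, heq⟩ := dotProduct_inv_mulVec_le_shift _ hA (hq 1) hB
    (fun h => (hα 0).ne' (congrFun h 0)) (by simpa [hadj] using hdom)
  rw [add_assoc, hdiag] at hle heq
  refine ⟨hle, fun h => ?_⟩
  have hq1 := heq h
  ext i
  fin_cases i <;> simp <;> linarith

theorem stmt_12 (S : Matrix (Fin 2) (Fin 2) ℝ) (hS : S.PosDef)
    (α : Fin 2 → ℝ) (hα : ∀ i, 0 < α i)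
    (cov1 cov2 : ℝ)
    (hcov1 : cov1 = α 0 * S 0 0 + α 1 * S 1 0)
    (hcov2 : cov2 = α 1 * S 1 1 + α 0 * S 0 1)
    (hsum : 0 ≤ cov1 + cov2) (hord : cov2 ≤ cov1)
    (t : ℝ) (ht0 : 0 ≤ t) (ht : t ≤ (cov1 - cov2) / (α 1 * S.det)) :
    ∀ q : Fin 2 → ℝ, (∀ i, 0 ≤ q i) → q 0 + q 1 = t →
      α ⬝ᵥ ((S⁻¹ + diagonal ![t, 0])⁻¹ *ᵥ α) ≤ α ⬝ᵥ ((S⁻¹ + diagonal q)⁻¹ *ᵥ α) ∧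
      (α ⬝ᵥ ((S⁻¹ + diagonal q)⁻¹ *ᵥ α) ≤ α ⬝ᵥ ((S⁻¹ + diagonal ![t, 0])⁻¹ *ᵥ α) →
        q = ![t, 0]) :=
  stmt_12_general S hS α hα cov1 cov2 hcov1 hcov2 hsum t ht
end

section
/- Binary choice posterior variance (Stage 1): Suppose (θ₁,θ₂) has prior covariance Σ with Σ₁₁ ≥ Σ₂₂, ω = θ₁ + θ₂, and the agent devotes all attention to θ₁ (i.e., acquires t units of unit-precision Gaussian information about θ₁). Then for t ≤ t₁* := (Σ₁₁ − Σ₂₂)/det(Σ), the posterior covariance matrix is (1/(1+Σ₁₁t))·[[Σ₁₁, Σ₁₂],[Σ₂₁, Σ₂₂ + det(Σ)t]], and the posterior variance of ω equals (Σ₁₁ + Σ₂₂ + 2Σ₁₂ + det(Σ)t)/(1 + Σ₁₁t). -/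
open Matrix

theorem Matrix.inv_add_diagonal_fin_two {K : Type*} [Field K] (S : Matrix (Fin 2) (Fin 2) K)
    (hS : S.det ≠ 0) (t : K) (ht : 1 + S 0 0 * t ≠ 0) :
    (S⁻¹ + diagonal ![t, 0])⁻¹ =
      (1 / (1 + S 0 0 * t)) • !![S 0 0, S 0 1; S 1 0, S 1 1 + S.det * t] := by
  refine inv_eq_right_inv ?_
  rw [inv_def, adjugate_fin_two, Ring.inverse_eq_inv, det_fin_two] at *
  ext i j
  fin_cases i <;> fin_cases j <;>
    simp [mul_apply, Fin.sum_univ_two] <;> field_simp <;> ring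

theorem Matrix.dotProduct_mulVec_fin_two {R : Type*} [CommSemiring R]
    (M : Matrix (Fin 2) (Fin 2) R) (v : Fin 2 → R) :
    v ⬝ᵥ (M *ᵥ v) = M 0 0 * v 0 ^ 2 + (M 0 1 + M 1 0) * v 0 * v 1 + M 1 1 * v 1 ^ 2 := by
  simp only [dotProduct, mulVec, Fin.sum_univ_two]
  ring

theorem stmt_16_general (S : Matrix (Fin 2) (Fin 2) ℝ) (hS : S.PosDef)
    (t : ℝ) (ht0 : 0 ≤ t) :
    (S⁻¹ + diagonal ![t, 0])⁻¹ =
      (1 / (1 + S 0 0 * t)) • !![S 0 0, S 0 1; S 1 0, S 1 1 + S.det * t] ∧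
    (![1, 1] : Fin 2 → ℝ) ⬝ᵥ ((S⁻¹ + diagonal ![t, 0])⁻¹ *ᵥ ![1, 1]) =
      (S 0 0 + S 1 1 + 2 * S 0 1 + S.det * t) / (1 + S 0 0 * t) := by
  have h00 : 0 < S 0 0 := hS.diag_pos
  have hpos : 0 < 1 + S 0 0 * t := by positivity
  have hsym : S 1 0 = S 0 1 := hS.isHermitian.apply 0 1
  have hpost := inv_add_diagonal_fin_two S hS.det_pos.ne' t hpos.ne'
  refine ⟨hpost, ?_⟩
  rw [hpost, dotProduct_mulVec_fin_two]
  simp only [Matrix.smul_apply, of_apply, cons_val', cons_val_zero, cons_val_one, empty_val',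
    cons_val_fin_one, smul_eq_mul, hsym]
  field_simp
  ring

theorem stmt_16 (S : Matrix (Fin 2) (Fin 2) ℝ) (hS : S.PosDef)
    (hord : S 1 1 ≤ S 0 0) (t : ℝ) (ht0 : 0 ≤ t)
    (ht : t ≤ (S 0 0 - S 1 1) / S.det) :
    (S⁻¹ + diagonal ![t, 0])⁻¹ =
      (1 / (1 + S 0 0 * t)) • !![S 0 0, S 0 1; S 1 0, S 1 1 + S.det * t] ∧
    (![1, 1] : Fin 2 → ℝ) ⬝ᵥ ((S⁻¹ + diagonal ![t, 0])⁻¹ *ᵥ ![1, 1]) =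
      (S 0 0 + S 1 1 + 2 * S 0 1 + S.det * t) / (1 + S 0 0 * t) :=
  stmt_16_general S hS t ht0
end

section
/- Binary choice posterior variance (Stage 2): In the setting of the previous statement, for t ≥ t₁* = (Σ₁₁ − Σ₂₂)/det(Σ), under the optimal strategy (full attention to θ₁ until t₁*, then equal split), the posterior variance of ω = θ₁ + θ₂ at time t equals 4·det(Σ)/(Σ₁₁ + Σ₂₂ − 2Σ₁₂ + det(Σ)·t). -/
/-!
The all-ones vector is an eigenvector of the posterior precision
`M = Σ⁻¹ + diag((t + t₁*)/2, (t - t₁*)/2)`: the correction `±t₁*/2` exactly cancels the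
asymmetry `(Σ₁₁ - Σ₂₂)/det Σ` of `Σ⁻¹ 𝟙`, leaving the eigenvalue
`c = (Σ₁₁ + Σ₂₂ - 2Σ₁₂ + det Σ · t) / (2 det Σ)`. Since `t ≥ t₁* ≥ 0`, `M` is
positive definite, hence invertible, and `𝟙ᵀ M⁻¹ 𝟙 = 𝟙ᵀ 𝟙 / c = 2 / c`.
-/

open Matrix

namespace Matrix

theorem inv_mulVec_eq_inv_smul_of_mulVec_eq_smul {n K : Type*} [Fintype n] [DecidableEq n]
    [Field K] {M : Matrix n n K} (hM : IsUnit M.det) {v : n → K} {c : K}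
    (hv : M *ᵥ v = c • v) : M⁻¹ *ᵥ v = c⁻¹ • v := by
  have hv' : v = c • M⁻¹ *ᵥ v := by
    rw [← mulVec_smul, ← hv, mulVec_mulVec, nonsing_inv_mul M hM, one_mulVec]
  by_cases hc : c = 0
  · rw [hc, zero_smul] at hv'
    simp [hv']
  · conv_rhs => rw [hv']
    rw [smul_smul, inv_mul_cancel₀ hc, one_smul]

theorem inv_mulVec_fin_two {K : Type*} [Field K] (S : Matrix (Fin 2) (Fin 2) K) (x y : K) :
    S⁻¹ *ᵥ ![x, y] = S.det⁻¹ • ![S 1 1 * x - S 0 1 * y, S 0 0 * y - S 1 0 * x] := by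
  rw [inv_def, adjugate_fin_two, Ring.inverse_eq_inv', smul_mulVec]
  congr 1
  ext i
  fin_cases i <;> simp [mulVec, dotProduct, Fin.sum_univ_two] <;> ring

end Matrix

theorem inv_add_diagonal_mulVec_ones {S : Matrix (Fin 2) (Fin 2) ℝ} (hsymm : S 1 0 = S 0 1)
    (hdet : S.det ≠ 0) (t : ℝ) :
    (S⁻¹ + diagonal ![(t + (S 0 0 - S 1 1) / S.det) / 2,
                      (t - (S 0 0 - S 1 1) / S.det) / 2]) *ᵥ ![1, 1] =
      ((S 0 0 + S 1 1 - 2 * S 0 1 + S.det * t) / (2 * S.det)) • ![1, 1] := by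
  rw [add_mulVec, inv_mulVec_fin_two, hsymm]
  ext i
  fin_cases i <;> simp <;> field_simp <;> ring

theorem stmt_17 (S : Matrix (Fin 2) (Fin 2) ℝ) (hS : S.PosDef)
    (hord : S 1 1 ≤ S 0 0) (t : ℝ)
    (ht : (S 0 0 - S 1 1) / S.det ≤ t) :
    (![1, 1] : Fin 2 → ℝ) ⬝ᵥ
      ((S⁻¹ + diagonal ![(t + (S 0 0 - S 1 1) / S.det) / 2,
                         (t - (S 0 0 - S 1 1) / S.det) / 2])⁻¹ *ᵥ ![1, 1]) =
      4 * S.det / (S 0 0 + S 1 1 - 2 * S 0 1 + S.det * t) := by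
  have hdet : 0 < S.det := hS.det_pos
  have hsymm : S 1 0 = S 0 1 := by simpa using congrFun (congrFun hS.isHermitian 0) 1
  have hstart : 0 ≤ (S 0 0 - S 1 1) / S.det := div_nonneg (sub_nonneg.2 hord) hdet.le
  have hprec : (S⁻¹ + diagonal ![(t + (S 0 0 - S 1 1) / S.det) / 2,
      (t - (S 0 0 - S 1 1) / S.det) / 2]).PosDef := by
    refine hS.inv.add_posSemidef (posSemidef_diagonal_iff.2 fun i => ?_)
    fin_cases i <;> simp <;> linarith
  rw [inv_mulVec_eq_inv_smul_of_mulVec_eq_smul (isUnit_iff_ne_zero.2 hprec.det_pos.ne')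
    (inv_add_diagonal_mulVec_ones hsymm hdet.ne' t)]
  simp [dotProduct, Fin.sum_univ_two]
  ring
end

section
/- Media game first-stage length: Let σ_ω², φ₁, φ₂ > 0, 0 < ζ₁ ≤ ζ₂, and define θ₁ = (ω + φ₁b)/ζ₁, θ₂ = (ω − φ₂b)/ζ₂ where ω, b are independent with variances σ_ω² and 1. Let Σ be the covariance matrix of (θ₁, θ₂), so Σ₁₁ = (σ_ω² + φ₁²)/ζ₁², Σ₂₂ = (σ_ω² + φ₂²)/ζ₂², Σ₁₂ = (σ_ω² − φ₁φ₂)/(ζ₁ζ₂), and ω = α₁θ₁ + α₂θ₂ with α₁ = ζ₁φ₂/(φ₁+φ₂), α₂ = ζ₂φ₁/(φ₁+φ₂). Then cov_i := α_iΣ_{ii} + α_jΣ_{ji} = σ_ω²/ζ_i for i = 1,2, det(Σ) = σ_ω²·((φ₁+φ₂)/(ζ₁ζ₂))², and t₁* := (cov₁ − cov₂)/(α₂ det(Σ)) = ζ₁(ζ₂ − ζ₁)/(φ₁(φ₁ + φ₂)). -/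
theorem stmt_18 (σω φ1 φ2 ζ1 ζ2 : ℝ)
    (hσ : 0 < σω) (hφ1 : 0 < φ1) (hφ2 : 0 < φ2) (hζ1 : 0 < ζ1) (hζ : ζ1 ≤ ζ2)
    (S11 S22 S12 α1 α2 : ℝ)
    (hS11 : S11 = (σω ^ 2 + φ1 ^ 2) / ζ1 ^ 2)
    (hS22 : S22 = (σω ^ 2 + φ2 ^ 2) / ζ2 ^ 2)
    (hS12 : S12 = (σω ^ 2 - φ1 * φ2) / (ζ1 * ζ2))
    (hα1 : α1 = ζ1 * φ2 / (φ1 + φ2))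
    (hα2 : α2 = ζ2 * φ1 / (φ1 + φ2)) :
    α1 * S11 + α2 * S12 = σω ^ 2 / ζ1 ∧
    α2 * S22 + α1 * S12 = σω ^ 2 / ζ2 ∧
    S11 * S22 - S12 ^ 2 = σω ^ 2 * ((φ1 + φ2) / (ζ1 * ζ2)) ^ 2 ∧
    ((α1 * S11 + α2 * S12) - (α2 * S22 + α1 * S12)) /
        (α2 * (S11 * S22 - S12 ^ 2)) =
      ζ1 * (ζ2 - ζ1) / (φ1 * (φ1 + φ2)) := by
  have hζ2 : 0 < ζ2 := lt_of_lt_of_le hζ1 hζ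
  have hφ : 0 < φ1 + φ2 := by linarith
  have hζ1' : ζ1 ≠ 0 := ne_of_gt hζ1
  have hζ2' : ζ2 ≠ 0 := ne_of_gt hζ2
  have hφ' : φ1 + φ2 ≠ 0 := ne_of_gt hφ
  have hφ1' : φ1 ≠ 0 := ne_of_gt hφ1
  have hσ' : σω ≠ 0 := ne_of_gt hσ
  have h1 : α1 * S11 + α2 * S12 = σω ^ 2 / ζ1 := by
    subst hS11 hS12 hα1 hα2; field_simp; ring
  have h2 : α2 * S22 + α1 * S12 = σω ^ 2 / ζ2 := by
    subst hS22 hS12 hα1 hα2; field_simp; ring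
  have h3 : S11 * S22 - S12 ^ 2 = σω ^ 2 * ((φ1 + φ2) / (ζ1 * ζ2)) ^ 2 := by
    subst hS11 hS22 hS12; field_simp; ring
  refine ⟨h1, h2, h3, ?_⟩
  rw [h1, h2, h3, hα2]
  field_simp
end

section
/- Media game equilibrium bias: For λ, κ > 0 with λκ² ≥ 9/16, let φ* = (κ + √(κ² − 1/(2λ)))/2. Then the function f(φ) = φ*/(φ + φ*) − λ(κ − φ)² on φ ∈ [0, ∞) attains its maximum at φ = φ*. Conversely, if φ₁ = φ₂ = φ* is a symmetric pure-strategy equilibrium of the game with payoffs U_i = φ_j/(φ_i + φ_j) − λ(κ − φ_i)² (j ≠ i), then λκ² ≥ 9/16. -/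
/-- Key algebraic identity for the payoff difference. -/
lemma stmt_19_aux (l k s φ : ℝ) (hl : 0 < l) (hs2 : s ^ 2 = k ^ 2 - 1 / (2 * l))
    (hpos : 0 < φ + (k + s) / 2) (hks : 0 < k + s) :
    ((k + s) / 2) / ((k + s) / 2 + (k + s) / 2) - l * (k - (k + s) / 2) ^ 2
      - (((k + s) / 2) / (φ + (k + s) / 2) - l * (k - φ) ^ 2)
      = l * (φ - (k + s) / 2) ^ 2 * (φ + (k + s) / 2 - k + s) / (φ + (k + s) / 2) := by
  have h1 : φ + (k + s) / 2 ≠ 0 := ne_of_gt hpos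
  have h2 : (k + s) ≠ 0 := ne_of_gt hks
  have h3 : (2 * l) ≠ 0 := by positivity
  have hs2' : 2 * l * s ^ 2 = 2 * l * k ^ 2 - 1 := by
    field_simp at hs2; linarith
  have step1 : ((k + s) / 2) / ((k + s) / 2 + (k + s) / 2) - l * (k - (k + s) / 2) ^ 2
      - (((k + s) / 2) / (φ + (k + s) / 2) - l * (k - φ) ^ 2)
      = (φ - (k + s) / 2) * (2 * l * (φ + (k + s) / 2) ^ 2 - 4 * l * k * (φ + (k + s) / 2) + 1)
          / (2 * (φ + (k + s) / 2)) := by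
    have e0 : ((k + s) / 2) / ((k + s) / 2 + (k + s) / 2) = 1 / 2 := by
      rw [div_eq_iff (by intro h; exact h2 (by linarith))]; ring
    have c : ((k + s) / 2) / (φ + (k + s) / 2) * (φ + (k + s) / 2) = (k + s) / 2 :=
      div_mul_cancel₀ _ h1
    rw [e0, eq_div_iff (by positivity : (2:ℝ) * (φ + (k + s) / 2) ≠ 0)]
    linear_combination (-2 : ℝ) * c
  have step2 : (φ - (k + s) / 2) * (2 * l * (φ + (k + s) / 2) ^ 2 - 4 * l * k * (φ + (k + s) / 2) + 1)
      = 2 * (l * (φ - (k + s) / 2) ^ 2 * (φ + (k + s) / 2 - k + s)) := by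
    linear_combination (φ - (k + s) / 2) * hs2'
  rw [step1, step2]
  field_simp

theorem stmt_19 (l k : ℝ) (hl : 0 < l) (hk : 0 < k) :
    let φs : ℝ := (k + Real.sqrt (k ^ 2 - 1 / (2 * l))) / 2
    let f : ℝ → ℝ := fun φ => φs / (φ + φs) - l * (k - φ) ^ 2
    (l * k ^ 2 ≥ 9 / 16 → ∀ φ : ℝ, 0 ≤ φ → f φ ≤ f φs) ∧
    ((∀ φ : ℝ, 0 < φ → f φ ≤ f φs) → l * k ^ 2 ≥ 9 / 16) := by
  intro φs f
  set s := Real.sqrt (k ^ 2 - 1 / (2 * l)) with hs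
  have hsnn : 0 ≤ s := Real.sqrt_nonneg _
  constructor
  · intro h9 φ hφ
    have h8 : 1 / (2 * l) ≤ 8 * k ^ 2 / 9 := by
      rw [div_le_div_iff₀ (by positivity) (by norm_num)]
      nlinarith
    have hd : (0:ℝ) ≤ k ^ 2 - 1 / (2 * l) := by nlinarith [sq_nonneg k]
    have hs2 : s ^ 2 = k ^ 2 - 1 / (2 * l) := Real.sq_sqrt hd
    have h9s : k ^ 2 ≤ 9 * s ^ 2 := by rw [hs2]; linarith
    have hk3 : 0 < k + 3 * s := by linarith
    have h3s : k ≤ 3 * s := by nlinarith [h9s, hk3]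
    have hks : 0 < k + s := by linarith
    have hpos : 0 < φ + (k + s) / 2 := by linarith
    have key := stmt_19_aux l k s φ hl hs2 hpos hks
    have hφs : φs = (k + s) / 2 := rfl
    have hfφ : f φ = ((k + s) / 2) / (φ + (k + s) / 2) - l * (k - φ) ^ 2 := by
      simp only [f, hφs]
    have hfφs : f φs = ((k + s) / 2) / ((k + s) / 2 + (k + s) / 2) - l * (k - (k + s) / 2) ^ 2 := by
      simp only [f, hφs]
    rw [hfφ, hfφs]
    have hnn : 0 ≤ l * (φ - (k + s) / 2) ^ 2 * (φ + (k + s) / 2 - k + s) / (φ + (k + s) / 2) := by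
      apply div_nonneg _ (le_of_lt hpos)
      have h' : 0 ≤ φ + (k + s) / 2 - k + s := by linarith
      positivity
    linarith [key]
  · intro hyp
    by_contra hlt
    push_neg at hlt
    rcases le_or_gt 0 (k ^ 2 - 1 / (2 * l)) with hd | hd
    · -- Case B: discriminant nonneg, but l k² < 9/16 ⇒ 3s < k
      have hs2 : s ^ 2 = k ^ 2 - 1 / (2 * l) := Real.sq_sqrt hd
      have h8 : 8 * k ^ 2 < 9 * (1 / (2 * l)) := by
        rw [mul_one_div, lt_div_iff₀ (by positivity)]
        nlinarith
      have h9s : 9 * s ^ 2 < k ^ 2 := by rw [hs2]; linarith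
      have hk3 : 0 < k + 3 * s := by linarith
      have h3s : 3 * s < k := by nlinarith [h9s, hk3]
      have hks : 0 < k + s := by linarith
      set φ := (k - 3 * s) / 4 with hφdef
      have hφpos : 0 < φ := by rw [hφdef]; linarith
      have hpos : 0 < φ + (k + s) / 2 := by linarith
      have key := stmt_19_aux l k s φ hl hs2 hpos hks
      have hφs : φs = (k + s) / 2 := rfl
      have hne : 0 < (φ - (k + s) / 2) ^ 2 := by
        have h' : φ - (k + s) / 2 ≠ 0 := by rw [hφdef]; intro h; nlinarith
        positivity
      have hneg : φ + (k + s) / 2 - k + s < 0 := by rw [hφdef]; linarith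
      have hkey : l * (φ - (k + s) / 2) ^ 2 * (φ + (k + s) / 2 - k + s) / (φ + (k + s) / 2) < 0 := by
        apply div_neg_of_neg_of_pos _ hpos
        have h1 : 0 < l * (φ - (k + s) / 2) ^ 2 := by positivity
        nlinarith
      have hle := hyp φ hφpos
      have hfφ : f φ = ((k + s) / 2) / (φ + (k + s) / 2) - l * (k - φ) ^ 2 := by
        simp only [f, hφs]
      have hfφs : f φs = ((k + s) / 2) / ((k + s) / 2 + (k + s) / 2) - l * (k - (k + s) / 2) ^ 2 := by
        simp only [f, hφs]
      rw [hfφ, hfφs] at hle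
      linarith
    · -- Case A: discriminant negative, s = 0, φs = k/2
      have hs0 : s = 0 := by
        rw [hs]
        exact Real.sqrt_eq_zero_of_nonpos (by linarith)
      have hφs : φs = k / 2 := by
        rw [show φs = (k + s) / 2 from rfl, hs0]; ring
      have h2lk : 2 * l * k ^ 2 < 1 := by
        have h' : k ^ 2 < 1 / (2 * l) := by linarith
        have := (lt_div_iff₀ (show (0:ℝ) < 2 * l by positivity)).mp h'
        linarith
      have hle := hyp (k / 4) (by positivity)
      have hfφ : f (k / 4) = (k / 2) / (k / 4 + k / 2) - l * (k - k / 4) ^ 2 := by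
        simp only [f, hφs]
      have hfφs : f φs = (k / 2) / (k / 2 + k / 2) - l * (k - k / 2) ^ 2 := by
        simp only [f, hφs]
      rw [hfφ, hfφs] at hle
      have e1 : (k / 2) / (k / 4 + k / 2) = 2 / 3 := by
        rw [div_eq_iff (by positivity)]; ring
      have e2 : (k / 2) / (k / 2 + k / 2) = 1 / 2 := by
        rw [div_eq_iff (by positivity)]; ring
      rw [e1, e2] at hle
      nlinarith
end
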